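/- arXiv:1311.5691 — 7 statements merged into one kernel-verified Lean document; each statement's English description precedes it below -/
import Mathlib

section
/- Let m, M ∈ ℝ^n be vectors arranged in nonincreasing order with 0 ≤ m_i ≤ M_i for all i, let a be a real number with Σ_{i=1}^n m_i ≤ a ≤ Σ_{i=1}^n M_i, and let S_a = {x ∈ ℝ^n : x_1 ≥ x_2 ≥ ⋯ ≥ x_n ≥ 0, Σ_{i=1}^n x_i = a, and m_i ≤ x_i ≤ M_i for all i}. Let k ≥ 0 be the smallest integer such that Σ_{i=1}^k M_i + Σ_{i=k+1}^n m_i ≤ a < Σ_{i=1}^{k+1} M_i + Σ_{i=k+2}^n m_i, and set θ = a − Σ_{i=1}^k M_i − Σ_{i=k+2}^n m_i. Then the vector x* = (M_1, …, M_k, θ, m_{k+2}, …, m_n) belongs to S_a and majorizes every x ∈ S_a, i.e. Σ_{i=1}^j x_i ≤ Σ_{i=1}^j x*_i for all j = 1, …, n−1 and Σ_{i=1}^n x_i = Σ_{i=1}^n x*_i. -/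
/-!
The vector `x*` fills the budget `a` greedily from the top: it takes the upper bounds `M` as long
as possible, the lower bounds `m` afterwards, and the remainder `θ` at the switching index `k`.
Its membership in `S_a` comes from `m k ≤ θ ≤ M k`, which is exactly the defining inequality of
`k`. For majorization, a prefix of length `j ≤ k` of `x*` consists of upper bounds, while for
`j > k` the complementary suffix consists of lower bounds and both vectors have total `a`.
When `k ≥ n`, minimality of `k` forces `a = ∑ M`, so `x* = M` on the first `n` coordinates.
-/

open Finset

theorem exists_lt_map_le_lt_map_succ {α : Type*} [LinearOrder α] (f : ℕ → α) {a : α} :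
    ∀ {n : ℕ}, f 0 ≤ a → a < f n → ∃ j < n, f j ≤ a ∧ a < f (j + 1)
  | 0, h0, hn => absurd h0 (not_le.2 hn)
  | n + 1, h0, hn => by
    by_cases han : a < f n
    · obtain ⟨j, hj, hja⟩ := exists_lt_map_le_lt_map_succ f h0 han
      exact ⟨j, hj.trans n.lt_succ_self, hja⟩
    · exact ⟨n, n.lt_succ_self, not_lt.1 han, hn⟩

theorem sum_range_le_of_sum_range_eq_of_tail_le {x y : ℕ → ℝ} {n j : ℕ}
    (hsum : ∑ i ∈ range n, x i = ∑ i ∈ range n, y i) (hj : j ≤ n)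
    (htail : ∀ i ∈ Ico j n, y i ≤ x i) :
    ∑ i ∈ range j, x i ≤ ∑ i ∈ range j, y i := by
  rw [← sum_range_add_sum_Ico x hj, ← sum_range_add_sum_Ico y hj] at hsum
  linarith [sum_le_sum htail]

section Threshold

variable (n : ℕ) (M m : ℕ → ℝ)

def mixedSum (j : ℕ) : ℝ :=
  ∑ i ∈ range j, M i + ∑ i ∈ Ico j n, m i

variable {n M m}

theorem mixedSum_zero : mixedSum n M m 0 = ∑ i ∈ range n, m i := by
  simp [mixedSum]

theorem mixedSum_self : mixedSum n M m n = ∑ i ∈ range n, M i := by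
  simp [mixedSum]

theorem mixedSum_of_lt {k : ℕ} (hk : k < n) :
    mixedSum n M m k = ∑ i ∈ range k, M i + m k + ∑ i ∈ Ico (k + 1) n, m i := by
  rw [mixedSum, sum_eq_sum_Ico_succ_bot hk, add_assoc]

theorem mixedSum_succ {k : ℕ} :
    mixedSum n M m (k + 1) = ∑ i ∈ range k, M i + M k + ∑ i ∈ Ico (k + 1) n, m i := by
  rw [mixedSum, sum_range_succ]

theorem eq_sum_range_of_forall_not_crossing {a : ℝ}
    (hm : ∑ i ∈ range n, m i ≤ a) (hM : a ≤ ∑ i ∈ range n, M i)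
    (h : ∀ j < n, ¬(mixedSum n M m j ≤ a ∧ a < mixedSum n M m (j + 1))) :
    a = ∑ i ∈ range n, M i := by
  refine hM.antisymm (not_lt.1 fun ha => ?_)
  rw [← mixedSum_zero] at hm
  rw [← mixedSum_self] at ha
  obtain ⟨j, hj, hja⟩ := exists_lt_map_le_lt_map_succ (mixedSum n M m) hm ha
  exact h j hj hja

end Threshold

section GreedyFill

variable (M m : ℕ → ℝ) (k : ℕ) (θ : ℝ)

def greedyFill (i : ℕ) : ℝ :=
  if i < k then M i else if i = k then θ else m i

variable {M m k θ}

theorem greedyFill_of_lt {i : ℕ} (hi : i < k) : greedyFill M m k θ i = M i :=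
  if_pos hi

theorem greedyFill_self : greedyFill M m k θ k = θ := by
  simp [greedyFill]

theorem greedyFill_of_gt {i : ℕ} (hi : k < i) : greedyFill M m k θ i = m i := by
  simp [greedyFill, hi.ne', hi.not_gt]

theorem sum_range_greedyFill_of_le {n : ℕ} (hn : n ≤ k) :
    ∑ i ∈ range n, greedyFill M m k θ i = ∑ i ∈ range n, M i :=
  sum_congr rfl fun _ hi => greedyFill_of_lt ((mem_range.1 hi).trans_le hn)

theorem sum_range_greedyFill {n : ℕ} (hk : k < n) :
    ∑ i ∈ range n, greedyFill M m k θ i =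
      ∑ i ∈ range k, M i + θ + ∑ i ∈ Ico (k + 1) n, m i := by
  rw [← sum_range_add_sum_Ico _ hk, sum_range_succ, sum_range_greedyFill_of_le le_rfl,
    greedyFill_self]
  congr 1
  exact sum_congr rfl fun i hi => greedyFill_of_gt (mem_Ico.1 hi).1

variable {n : ℕ}

theorem greedyFill_mem_Icc (hθ : k < n → m k ≤ θ ∧ θ ≤ M k) {i : ℕ} (hi : i < n)
    (hmM : m i ≤ M i) : greedyFill M m k θ i ∈ Set.Icc (m i) (M i) := by
  rcases lt_trichotomy i k with hik | rfl | hki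
  · rw [greedyFill_of_lt hik]
    exact ⟨hmM, le_rfl⟩
  · rw [greedyFill_self]
    exact hθ hi
  · rw [greedyFill_of_gt hki]
    exact ⟨le_rfl, hmM⟩

theorem greedyFill_antitone (hm : ∀ i j, i ≤ j → j < n → m j ≤ m i)
    (hM : ∀ i j, i ≤ j → j < n → M j ≤ M i) (hθ : k < n → m k ≤ θ ∧ θ ≤ M k)
    {i j : ℕ} (hij : i ≤ j) (hj : j < n) : greedyFill M m k θ j ≤ greedyFill M m k θ i := by
  rcases lt_or_ge j k with hjk | hkj
  · rw [greedyFill_of_lt hjk, greedyFill_of_lt (hij.trans_lt hjk)]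
    exact hM i j hij hj
  have hkn : k < n := hkj.trans_lt hj
  have hj_le : greedyFill M m k θ j ≤ θ := by
    rcases hkj.eq_or_lt with rfl | hkj
    · exact greedyFill_self.le
    · rw [greedyFill_of_gt hkj]
      exact (hm k j hkj.le hj).trans (hθ hkn).1
  rcases lt_or_ge k i with hki | hik
  · rw [greedyFill_of_gt hki, greedyFill_of_gt (hki.trans_le hij)]
    exact hm i j hij hj
  · refine hj_le.trans ?_
    rcases hik.eq_or_lt with rfl | hik
    · exact greedyFill_self.ge
    · rw [greedyFill_of_lt hik]
      exact (hθ hkn).2.trans (hM i k hik.le hkn)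

theorem sum_range_le_sum_range_greedyFill {x : ℕ → ℝ}
    (hx : ∀ i, i < n → m i ≤ x i ∧ x i ≤ M i)
    (hsum : ∑ i ∈ range n, x i = ∑ i ∈ range n, greedyFill M m k θ i)
    {j : ℕ} (hj : j ≤ n) :
    ∑ i ∈ range j, x i ≤ ∑ i ∈ range j, greedyFill M m k θ i := by
  rcases le_or_gt j k with hjk | hkj
  · rw [sum_range_greedyFill_of_le hjk]
    exact sum_le_sum fun i hi => (hx i ((mem_range.1 hi).trans_le hj)).2
  · refine sum_range_le_of_sum_range_eq_of_tail_le hsum hj fun i hi => ?_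
    rw [mem_Ico] at hi
    rw [greedyFill_of_gt (hkj.trans_le hi.1)]
    exact (hx i hi.2).1

end GreedyFill

theorem maximal_element_of_Sa_general (n : ℕ) (m M : ℕ → ℝ)
    (hm_dec : ∀ i j, i ≤ j → j < n → m j ≤ m i)
    (hM_dec : ∀ i j, i ≤ j → j < n → M j ≤ M i)
    (hm_nonneg : ∀ i, i < n → 0 ≤ m i)
    (hmM : ∀ i, i < n → m i ≤ M i)
    (a : ℝ)
    (ha₁ : ∑ i ∈ range n, m i ≤ a) (ha₂ : a ≤ ∑ i ∈ range n, M i)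
    (k : ℕ)
    (hk : ∑ i ∈ range k, M i + ∑ i ∈ Ico k n, m i ≤ a ∧
          a < ∑ i ∈ range (k + 1), M i + ∑ i ∈ Ico (k + 1) n, m i)
    (hk_min : ∀ j, j < k →
        ¬ (∑ i ∈ range j, M i + ∑ i ∈ Ico j n, m i ≤ a ∧
           a < ∑ i ∈ range (j + 1), M i + ∑ i ∈ Ico (j + 1) n, m i))
    (θ : ℝ) (hθ : θ = a - ∑ i ∈ range k, M i - ∑ i ∈ Ico (k + 1) n, m i)
    (xstar : ℕ → ℝ)
    (hxstar : ∀ i, xstar i = if i < k then M i else if i = k then θ else m i) :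
    ((∀ i j, i ≤ j → j < n → xstar j ≤ xstar i) ∧ (∀ i, i < n → 0 ≤ xstar i) ∧
        ∑ i ∈ range n, xstar i = a ∧
        (∀ i, i < n → m i ≤ xstar i ∧ xstar i ≤ M i)) ∧
      ∀ x : ℕ → ℝ,
        ((∀ i j, i ≤ j → j < n → x j ≤ x i) ∧ (∀ i, i < n → 0 ≤ x i) ∧
            ∑ i ∈ range n, x i = a ∧
            (∀ i, i < n → m i ≤ x i ∧ x i ≤ M i)) →
          (∀ j, 1 ≤ j → j ≤ n - 1 →
              ∑ i ∈ range j, x i ≤ ∑ i ∈ range j, xstar i) ∧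
            ∑ i ∈ range n, x i = ∑ i ∈ range n, xstar i := by
  obtain rfl : xstar = greedyFill M m k θ := funext hxstar
  have hθ_mem : k < n → m k ≤ θ ∧ θ ≤ M k := fun hkn => by
    have h₁ : mixedSum n M m k ≤ a := hk.1
    have h₂ : a < mixedSum n M m (k + 1) := hk.2
    rw [mixedSum_of_lt hkn] at h₁
    rw [mixedSum_succ] at h₂
    constructor <;> linarith
  have hsum : ∑ i ∈ range n, greedyFill M m k θ i = a := by
    rcases lt_or_ge k n with hkn | hnk
    · rw [sum_range_greedyFill hkn, hθ]
      ring
    · rw [sum_range_greedyFill_of_le hnk]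
      exact (eq_sum_range_of_forall_not_crossing ha₁ ha₂ fun j hj =>
        hk_min j (hj.trans_le hnk)).symm
  have hbounds := fun i hi => greedyFill_mem_Icc hθ_mem hi (hmM i hi)
  refine ⟨⟨fun i j hij hj => greedyFill_antitone hm_dec hM_dec hθ_mem hij hj,
    fun i hi => (hm_nonneg i hi).trans (hbounds i hi).1, hsum, hbounds⟩, ?_⟩
  rintro x ⟨-, -, hxsum, hx⟩
  have hsum_eq := hxsum.trans hsum.symm
  exact ⟨fun j _ hj => sum_range_le_sum_range_greedyFill hx hsum_eq (hj.trans (n.sub_le 1)),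
    hsum_eq⟩

/-- Theorem 1 (maximal element of `S_a`): given nonincreasing vectors `m ≤ M`
with nonnegative entries and `∑ m ≤ a ≤ ∑ M`, if `k` is the smallest integer with
`∑_{i≤k} M_i + ∑_{i>k} m_i ≤ a < ∑_{i≤k+1} M_i + ∑_{i>k+1} m_i` and
`θ = a - ∑_{i≤k} M_i - ∑_{i>k+1} m_i`, then
`x* = (M_1, …, M_k, θ, m_{k+2}, …, m_n)` belongs to `S_a` and majorizes every
element of `S_a`.  (Everything is 0-indexed.) -/
theorem maximal_element_of_Sa (n : ℕ) (hn : 0 < n) (m M : ℕ → ℝ)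
    (hm_dec : ∀ i j, i ≤ j → j < n → m j ≤ m i)
    (hM_dec : ∀ i j, i ≤ j → j < n → M j ≤ M i)
    (hm_nonneg : ∀ i, i < n → 0 ≤ m i)
    (hmM : ∀ i, i < n → m i ≤ M i)
    (a : ℝ)
    (ha₁ : ∑ i ∈ range n, m i ≤ a) (ha₂ : a ≤ ∑ i ∈ range n, M i)
    (k : ℕ)
    (hk : ∑ i ∈ range k, M i + ∑ i ∈ Ico k n, m i ≤ a ∧
          a < ∑ i ∈ range (k + 1), M i + ∑ i ∈ Ico (k + 1) n, m i)
    (hk_min : ∀ j, j < k →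
        ¬ (∑ i ∈ range j, M i + ∑ i ∈ Ico j n, m i ≤ a ∧
           a < ∑ i ∈ range (j + 1), M i + ∑ i ∈ Ico (j + 1) n, m i))
    (θ : ℝ) (hθ : θ = a - ∑ i ∈ range k, M i - ∑ i ∈ Ico (k + 1) n, m i)
    (xstar : ℕ → ℝ)
    (hxstar : ∀ i, xstar i = if i < k then M i else if i = k then θ else m i) :
    ((∀ i j, i ≤ j → j < n → xstar j ≤ xstar i) ∧ (∀ i, i < n → 0 ≤ xstar i) ∧
        ∑ i ∈ range n, xstar i = a ∧
        (∀ i, i < n → m i ≤ xstar i ∧ xstar i ≤ M i)) ∧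
      ∀ x : ℕ → ℝ,
        ((∀ i j, i ≤ j → j < n → x j ≤ x i) ∧ (∀ i, i < n → 0 ≤ x i) ∧
            ∑ i ∈ range n, x i = a ∧
            (∀ i, i < n → m i ≤ x i ∧ x i ≤ M i)) →
          (∀ j, 1 ≤ j → j ≤ n - 1 →
              ∑ i ∈ range j, x i ≤ ∑ i ∈ range j, xstar i) ∧
            ∑ i ∈ range n, x i = ∑ i ∈ range n, xstar i :=
  maximal_element_of_Sa_general n m M hm_dec hM_dec hm_nonneg hmM a ha₁ ha₂ k hk hk_min θ hθ xstar
    hxstar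
end

section
/- Let m, M ∈ ℝ^n be vectors arranged in nonincreasing order with 0 ≤ m_i ≤ M_i for all i, let a be a real number with Σ_{i=1}^n m_i ≤ a ≤ Σ_{i=1}^n M_i, and let S_a = {x ∈ ℝ^n : x_1 ≥ x_2 ≥ ⋯ ≥ x_n ≥ 0, Σ_{i=1}^n x_i = a, and m_i ≤ x_i ≤ M_i for all i}. Let k ≥ 0 and d ≥ 0 be the smallest integers such that k + d < n and m_{k+1} ≤ ρ ≤ M_{n−d}, where ρ = (a − Σ_{i=1}^k m_i − Σ_{i=n−d+1}^n M_i)/(n − k − d). Then the vector x_* = (m_1, …, m_k, ρ, …, ρ, M_{n−d+1}, …, M_n) (with ρ repeated n−k−d times) belongs to S_a and is minorized by no element of S_a, i.e. x_* ⊴ x for every x ∈ S_a. -/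
/-!
Minimality of `(k, d)` forces `ρ ≤ m_i` for `i < k` and `M_i ≤ ρ` for `i ≥ n - d`: otherwise
moving index `k - 1` (or `n - d`) into the middle block would give a smaller admissible pair, since
the new level is a mediant of `ρ` and the released bound. Hence `x_*` is the clipping
`max m_i (min ρ M_i)` of `ρ` to the box `[m, M]`, which puts it in `S_a`. For `x ∈ S_a` the gap
`g j = ∑_{i<j} (x_i - x_* i)` is nonnegative at `j = k` (as `x ≥ m`) and at `j = n - d` (as `x ≤ M`
and both vectors sum to `a`); on the middle block its increments `x_i - ρ` are nonincreasing, so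
`g` is concave there and stays nonnegative between the two endpoints.
-/

open Finset

lemma AntitoneOn.sub_mul_sum_Ico_le {y : ℕ → ℝ} {k j N : ℕ} (hy : AntitoneOn y (Set.Ico k N))
    (hkj : k ≤ j) (hjN : j ≤ N) :
    ((j : ℝ) - k) * ∑ i ∈ Ico k N, y i ≤ ((N : ℝ) - k) * ∑ i ∈ Ico k j, y i := by
  induction N, hjN using Nat.le_induction with
  | base => exact le_rfl
  | succ N hjN ih =>
    have hterm : ((j : ℝ) - k) * y N ≤ ∑ i ∈ Ico k j, y i := by
      have h := card_nsmul_le_sum (Ico k j) y (y N) fun i hi => by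
        simp only [mem_Ico] at hi
        exact hy ⟨by omega, by omega⟩ ⟨by omega, by omega⟩ (by omega)
      rwa [Nat.card_Ico, nsmul_eq_mul, Nat.cast_sub hkj] at h
    rw [sum_Ico_succ_top (hkj.trans hjN)]
    have := ih (hy.mono (Set.Ico_subset_Ico_right N.le_succ))
    push_cast
    linarith

/-- `j ↦ s + ∑_{k ≤ i < j} y i` is concave, so it is nonnegative between two points where it is. -/
lemma AntitoneOn.add_sum_Ico_nonneg {y : ℕ → ℝ} {k j N : ℕ} {s : ℝ}
    (hy : AntitoneOn y (Set.Ico k N)) (hkj : k ≤ j) (hjN : j ≤ N) (hk : 0 ≤ s)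
    (hN : 0 ≤ s + ∑ i ∈ Ico k N, y i) : 0 ≤ s + ∑ i ∈ Ico k j, y i := by
  rcases hjN.eq_or_lt with rfl | hjN'
  · exact hN
  have havg := hy.sub_mul_sum_Ico_le hkj hjN
  have hkj' : (k : ℝ) ≤ j := by exact_mod_cast hkj
  have hjN'' : (j : ℝ) < N := by exact_mod_cast hjN'
  have hmul : 0 ≤ ((N : ℝ) - k) * (s + ∑ i ∈ Ico k j, y i) := by
    nlinarith [mul_nonneg (sub_nonneg.2 hjN''.le) hk, mul_nonneg (sub_nonneg.2 hkj') hN]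
  exact (mul_nonneg_iff_of_pos_left (by linarith)).1 hmul

lemma mul_add_div_add_one_mem_Ioo_of_lt {L c r : ℝ} (hL : 0 < L) (h : c < r) :
    (L * r + c) / (L + 1) ∈ Set.Ioo c r := by
  constructor
  · rw [lt_div_iff₀ (by linarith)]; nlinarith
  · rw [div_lt_iff₀ (by linarith)]; nlinarith

lemma mul_add_div_add_one_mem_Ioo_of_gt {L c r : ℝ} (hL : 0 < L) (h : r < c) :
    (L * r + c) / (L + 1) ∈ Set.Ioo r c := by
  constructor
  · rw [lt_div_iff₀ (by linarith)]; nlinarith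
  · rw [div_lt_iff₀ (by linarith)]; nlinarith

section LevelVector

variable (n : ℕ) (m M : ℕ → ℝ) (a : ℝ)

/-- The paper's `ρ`: the common value of the middle block once the first `k` entries are set to
`m` and the last `d` entries to `M`. -/
noncomputable def levelAvg (k d : ℕ) : ℝ :=
  (a - ∑ i ∈ range k, m i - ∑ i ∈ Ico (n - d) n, M i) / ((n : ℝ) - k - d)

def levelVector (k d : ℕ) (ρ : ℝ) (i : ℕ) : ℝ :=
  if i < k then m i else if i < n - d then ρ else M i

variable {n m M a}

lemma sub_sub_pos_of_add_lt {k d : ℕ} (h : k + d < n) : 0 < (n : ℝ) - k - d := by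
  have : (k : ℝ) + d < n := by exact_mod_cast h
  linarith

lemma levelAvg_eq_mediant_succ_left {k d : ℕ} (h : k + 1 + d < n) :
    levelAvg n m M a k d =
      (((n : ℝ) - ↑(k + 1) - d) * levelAvg n m M a (k + 1) d + m k) /
        (((n : ℝ) - ↑(k + 1) - d) + 1) := by
  have hL := sub_sub_pos_of_add_lt h
  unfold levelAvg
  rw [mul_div_cancel₀ _ hL.ne', sum_range_succ]
  push_cast
  ring

lemma levelAvg_eq_mediant_succ_right {k d : ℕ} (h : k + (d + 1) < n) :
    levelAvg n m M a k d =
      (((n : ℝ) - k - ↑(d + 1)) * levelAvg n m M a k (d + 1) + M (n - (d + 1))) /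
        (((n : ℝ) - k - ↑(d + 1)) + 1) := by
  have hL := sub_sub_pos_of_add_lt h
  unfold levelAvg
  rw [mul_div_cancel₀ _ hL.ne', sum_eq_sum_Ico_succ_bot (by omega : n - (d + 1) < n),
    show n - (d + 1) + 1 = n - d by omega]
  push_cast
  ring

variable {k d : ℕ}

lemma levelAvg_le_of_lt_of_minimal (hkd : k + d < n) (hm : AntitoneOn m (Set.Iio n))
    (hρM : levelAvg n m M a k d ≤ M (n - d - 1))
    (hmin : ∀ k' d', k' + d' < n ∧ m k' ≤ levelAvg n m M a k' d' ∧
      levelAvg n m M a k' d' ≤ M (n - d' - 1) → k ≤ k' ∧ d ≤ d')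
    {i : ℕ} (hi : i < k) : levelAvg n m M a k d ≤ m i := by
  obtain ⟨k, rfl⟩ : ∃ k', k = k' + 1 := ⟨k - 1, by omega⟩
  refine le_trans ?_ (hm (by omega : i < n) (by omega : k < n) (by omega : i ≤ k))
  by_contra! hlt
  obtain ⟨hm_lt, hlt_ρ⟩ := mul_add_div_add_one_mem_Ioo_of_lt (sub_sub_pos_of_add_lt hkd) hlt
  rw [← levelAvg_eq_mediant_succ_left hkd] at hm_lt hlt_ρ
  have := (hmin k d ⟨by omega, hm_lt.le, hlt_ρ.le.trans hρM⟩).1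
  omega

lemma le_levelAvg_of_le_of_minimal (hkd : k + d < n) (hM : AntitoneOn M (Set.Iio n))
    (hmρ : m k ≤ levelAvg n m M a k d)
    (hmin : ∀ k' d', k' + d' < n ∧ m k' ≤ levelAvg n m M a k' d' ∧
      levelAvg n m M a k' d' ≤ M (n - d' - 1) → k ≤ k' ∧ d ≤ d')
    {i : ℕ} (hi : n - d ≤ i) (hin : i < n) : M i ≤ levelAvg n m M a k d := by
  obtain ⟨d, rfl⟩ : ∃ d', d = d' + 1 := ⟨d - 1, by omega⟩
  refine le_trans (hM (by omega : n - (d + 1) < n) hin hi) ?_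
  by_contra! hlt
  obtain ⟨hρ_lt, hlt_M⟩ := mul_add_div_add_one_mem_Ioo_of_gt (sub_sub_pos_of_add_lt hkd) hlt
  rw [← levelAvg_eq_mediant_succ_right hkd] at hρ_lt hlt_M
  have := (hmin k d ⟨by omega, hmρ.trans hρ_lt.le, by rw [Nat.sub_sub]; exact hlt_M.le⟩).2
  omega

variable {ρ : ℝ}

lemma levelVector_eq_max_min (hm : AntitoneOn m (Set.Iio n)) (hM : AntitoneOn M (Set.Iio n))
    (hmM : ∀ i < n, m i ≤ M i) (hmρ : ∀ i < k, ρ ≤ m i)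
    (hρM : ∀ i, n - d ≤ i → i < n → M i ≤ ρ) (hρ₁ : m k ≤ ρ) (hρ₂ : ρ ≤ M (n - d - 1))
    {i : ℕ} (hi : i < n) : levelVector n m M k d ρ i = max (m i) (min ρ (M i)) := by
  unfold levelVector
  split_ifs with hik hid
  · exact (max_eq_left ((min_le_left _ _).trans (hmρ i hik))).symm
  · rw [min_eq_left (hρ₂.trans (hM hi (by omega : n - d - 1 < n) (by omega))),
      max_eq_right ((hm (by omega : k < n) hi (by omega)).trans hρ₁)]
  · rw [min_eq_right (hρM i (by omega) hi), max_eq_right (hmM i hi)]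

lemma sum_levelVector (hk : k ≤ n - d) (hd : d ≤ n) :
    ∑ i ∈ range n, levelVector n m M k d ρ i =
      ∑ i ∈ range k, m i + ((n : ℝ) - k - d) * ρ + ∑ i ∈ Ico (n - d) n, M i := by
  rw [← sum_range_add_sum_Ico _ (hk.trans (n.sub_le d)),
    ← sum_Ico_consecutive _ hk (n.sub_le d)]
  have hprefix : ∑ i ∈ range k, levelVector n m M k d ρ i = ∑ i ∈ range k, m i :=
    sum_congr rfl fun i hi => if_pos (mem_range.1 hi)
  have hmiddle : ∑ i ∈ Ico k (n - d), levelVector n m M k d ρ i = ((n : ℝ) - k - d) * ρ := by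
    have hconst : ∀ i ∈ Ico k (n - d), levelVector n m M k d ρ i = ρ := fun i hi => by
      rw [mem_Ico] at hi
      exact (if_neg hi.1.not_gt).trans (if_pos hi.2)
    rw [sum_congr rfl hconst, sum_const, Nat.card_Ico, nsmul_eq_mul, Nat.cast_sub hk,
      Nat.cast_sub hd]
    ring
  have hsuffix : ∑ i ∈ Ico (n - d) n, levelVector n m M k d ρ i = ∑ i ∈ Ico (n - d) n, M i :=
    sum_congr rfl fun i hi => by
      rw [mem_Ico] at hi
      exact (if_neg (by omega)).trans (if_neg hi.1.not_gt)
  rw [hprefix, hmiddle, add_assoc, hsuffix]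

lemma sum_range_levelVector_le {x : ℕ → ℝ} (hk : k ≤ n - d) (hx : AntitoneOn x (Set.Iio n))
    (hmx : ∀ i < k, m i ≤ x i) (hxM : ∀ i, n - d ≤ i → i < n → x i ≤ M i)
    (hsum : ∑ i ∈ range n, levelVector n m M k d ρ i = ∑ i ∈ range n, x i)
    {j : ℕ} (hj : j ≤ n) :
    ∑ i ∈ range j, levelVector n m M k d ρ i ≤ ∑ i ∈ range j, x i := by
  set v := levelVector n m M k d ρ
  suffices hgap : 0 ≤ ∑ i ∈ range j, (x i - v i) by
    rw [sum_sub_distrib] at hgap; linarith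
  have hprefix : ∀ j ≤ k, 0 ≤ ∑ i ∈ range j, (x i - v i) := fun j hj =>
    sum_nonneg fun i hi => by
      have hik : i < k := (mem_range.1 hi).trans_le hj
      simpa only [v, levelVector, if_pos hik, sub_nonneg] using hmx i hik
  have hsuffix : ∀ j, n - d ≤ j → j ≤ n → 0 ≤ ∑ i ∈ range j, (x i - v i) := by
    intro j hdj hj
    have htotal : ∑ i ∈ range n, (x i - v i) = 0 := by rw [sum_sub_distrib, hsum, sub_self]
    have htail : ∑ i ∈ Ico j n, (x i - v i) ≤ 0 := sum_nonpos fun i hi => by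
      rw [mem_Ico] at hi
      simpa only [v, levelVector, if_neg (by omega : ¬i < k), if_neg (by omega : ¬i < n - d),
        sub_nonpos] using hxM i (by omega) hi.2
    rw [← sum_range_add_sum_Ico _ hj] at htotal
    linarith
  rcases le_or_gt j k with hjk | hkj
  · exact hprefix j hjk
  rcases le_or_gt (n - d) j with hdj | hjd
  · exact hsuffix j hdj hj
  have hmiddle : ∀ j, k ≤ j → j ≤ n - d →
      ∑ i ∈ range j, (x i - v i) = ∑ i ∈ range k, (x i - v i) + ∑ i ∈ Ico k j, (x i - ρ) := by
    intro j hkj hjd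
    rw [← sum_range_add_sum_Ico _ hkj]
    congr 1
    refine sum_congr rfl fun i hi => ?_
    rw [mem_Ico] at hi
    simp only [v, levelVector, if_neg hi.1.not_gt, if_pos (hi.2.trans_le hjd)]
  have hconcave : AntitoneOn (fun i => x i - ρ) (Set.Ico k (n - d)) :=
    fun i hi l hl hil => sub_le_sub_right
      (hx (hi.2.trans_le (n.sub_le d) : i < n) (hl.2.trans_le (n.sub_le d) : l < n) hil) ρ
  rw [hmiddle j hkj.le hjd.le]
  exact hconcave.add_sum_Ico_nonneg hkj.le hjd.le (hprefix k le_rfl)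
    (hmiddle (n - d) hk le_rfl ▸ hsuffix (n - d) le_rfl (n.sub_le d))

end LevelVector

theorem minimal_element_of_Sa_general (n : ℕ) (m M : ℕ → ℝ)
    (hm_dec : ∀ i j, i ≤ j → j < n → m j ≤ m i)
    (hM_dec : ∀ i j, i ≤ j → j < n → M j ≤ M i)
    (hm_nonneg : ∀ i, i < n → 0 ≤ m i)
    (hmM : ∀ i, i < n → m i ≤ M i)
    (a : ℝ)
    (k d : ℕ)
    (hkd : k + d < n)
    (ρ : ℝ)
    (hρ : ρ = (a - ∑ i ∈ range k, m i - ∑ i ∈ Ico (n - d) n, M i) /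
        ((n : ℝ) - k - d))
    (hρ₁ : m k ≤ ρ) (hρ₂ : ρ ≤ M (n - d - 1))
    (hkd_min : ∀ k' d' : ℕ,
        (k' + d' < n ∧
          m k' ≤ (a - ∑ i ∈ range k', m i - ∑ i ∈ Ico (n - d') n, M i) /
              ((n : ℝ) - k' - d') ∧
          (a - ∑ i ∈ range k', m i - ∑ i ∈ Ico (n - d') n, M i) /
              ((n : ℝ) - k' - d') ≤ M (n - d' - 1)) →
        k ≤ k' ∧ d ≤ d')
    (xstar : ℕ → ℝ)
    (hxstar : ∀ i, xstar i = if i < k then m i else if i < n - d then ρ else M i) :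
    ((∀ i j, i ≤ j → j < n → xstar j ≤ xstar i) ∧ (∀ i, i < n → 0 ≤ xstar i) ∧
        ∑ i ∈ range n, xstar i = a ∧
        (∀ i, i < n → m i ≤ xstar i ∧ xstar i ≤ M i)) ∧
      ∀ x : ℕ → ℝ,
        ((∀ i j, i ≤ j → j < n → x j ≤ x i) ∧ (∀ i, i < n → 0 ≤ x i) ∧
            ∑ i ∈ range n, x i = a ∧
            (∀ i, i < n → m i ≤ x i ∧ x i ≤ M i)) →
          (∀ j, 1 ≤ j → j ≤ n - 1 →
              ∑ i ∈ range j, xstar i ≤ ∑ i ∈ range j, x i) ∧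
            ∑ i ∈ range n, xstar i = ∑ i ∈ range n, x i := by
  have hm : AntitoneOn m (Set.Iio n) := fun i _ j hj hij => hm_dec i j hij hj
  have hM : AntitoneOn M (Set.Iio n) := fun i _ j hj hij => hM_dec i j hij hj
  obtain rfl : xstar = levelVector n m M k d ρ := funext hxstar
  obtain rfl : ρ = levelAvg n m M a k d := hρ
  have hsum : ∑ i ∈ range n, levelVector n m M k d (levelAvg n m M a k d) i = a := by
    rw [sum_levelVector (by omega) (by omega), levelAvg,
      mul_div_cancel₀ _ (sub_sub_pos_of_add_lt hkd).ne']
    ring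
  set ρ := levelAvg n m M a k d
  have hclip : ∀ i < n, levelVector n m M k d ρ i = max (m i) (min ρ (M i)) :=
    fun i => levelVector_eq_max_min hm hM hmM
      (fun _ hi => levelAvg_le_of_lt_of_minimal hkd hm hρ₂ hkd_min hi)
      (fun _ hdi hin => le_levelAvg_of_le_of_minimal hkd hM hρ₁ hkd_min hdi hin) hρ₁ hρ₂
  refine ⟨⟨fun i j hij hj => ?_, fun i hi => ?_, hsum, fun i hi => ?_⟩, ?_⟩
  · rw [hclip i (hij.trans_lt hj), hclip j hj]
    exact max_le_max (hm_dec i j hij hj) (min_le_min_left _ (hM_dec i j hij hj))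
  · rw [hclip i hi]
    exact (hm_nonneg i hi).trans (le_max_left _ _)
  · rw [hclip i hi]
    exact ⟨le_max_left _ _, max_le (hmM i hi) (min_le_right _ _)⟩
  rintro x ⟨hx_dec, -, hx_sum, hx_box⟩
  have hsum_eq := hsum.trans hx_sum.symm
  exact ⟨fun j _ hj => sum_range_levelVector_le (by omega)
    (fun i _ j hj hij => hx_dec i j hij hj) (fun i hi => (hx_box i (by omega)).1)
    (fun i _ hi => (hx_box i hi).2) hsum_eq (by omega), hsum_eq⟩

/-- Theorem 2 (minimal element of `S_a`): given nonincreasing vectors `m ≤ M`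
with nonnegative entries and `∑ m ≤ a ≤ ∑ M`, if `(k, d)` is the smallest pair of
integers with `k + d < n` and `m_{k+1} ≤ ρ ≤ M_{n-d}` where
`ρ = (a - ∑_{i≤k} m_i - ∑_{i>n-d} M_i)/(n-k-d)`, then
`x_* = (m_1, …, m_k, ρ^{n-k-d}, M_{n-d+1}, …, M_n)` belongs to `S_a` and is
majorized by every element of `S_a`.  (Everything is 0-indexed.) -/
theorem minimal_element_of_Sa (n : ℕ) (hn : 0 < n) (m M : ℕ → ℝ)
    (hm_dec : ∀ i j, i ≤ j → j < n → m j ≤ m i)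
    (hM_dec : ∀ i j, i ≤ j → j < n → M j ≤ M i)
    (hm_nonneg : ∀ i, i < n → 0 ≤ m i)
    (hmM : ∀ i, i < n → m i ≤ M i)
    (a : ℝ)
    (ha₁ : ∑ i ∈ range n, m i ≤ a) (ha₂ : a ≤ ∑ i ∈ range n, M i)
    (k d : ℕ)
    (hkd : k + d < n)
    (ρ : ℝ)
    (hρ : ρ = (a - ∑ i ∈ range k, m i - ∑ i ∈ Ico (n - d) n, M i) /
        ((n : ℝ) - k - d))
    (hρ₁ : m k ≤ ρ) (hρ₂ : ρ ≤ M (n - d - 1))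
    (hkd_min : ∀ k' d' : ℕ,
        (k' + d' < n ∧
          m k' ≤ (a - ∑ i ∈ range k', m i - ∑ i ∈ Ico (n - d') n, M i) /
              ((n : ℝ) - k' - d') ∧
          (a - ∑ i ∈ range k', m i - ∑ i ∈ Ico (n - d') n, M i) /
              ((n : ℝ) - k' - d') ≤ M (n - d' - 1)) →
        k ≤ k' ∧ d ≤ d')
    (xstar : ℕ → ℝ)
    (hxstar : ∀ i, xstar i = if i < k then m i else if i < n - d then ρ else M i) :
    ((∀ i j, i ≤ j → j < n → xstar j ≤ xstar i) ∧ (∀ i, i < n → 0 ≤ xstar i) ∧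
        ∑ i ∈ range n, xstar i = a ∧
        (∀ i, i < n → m i ≤ xstar i ∧ xstar i ≤ M i)) ∧
      ∀ x : ℕ → ℝ,
        ((∀ i j, i ≤ j → j < n → x j ≤ x i) ∧ (∀ i, i < n → 0 ≤ x i) ∧
            ∑ i ∈ range n, x i = a ∧
            (∀ i, i < n → m i ≤ x i ∧ x i ≤ M i)) →
          (∀ j, 1 ≤ j → j ≤ n - 1 →
              ∑ i ∈ range j, xstar i ≤ ∑ i ∈ range j, x i) ∧
            ∑ i ∈ range n, xstar i = ∑ i ∈ range n, x i :=
  minimal_element_of_Sa_general n m M hm_dec hM_dec hm_nonneg hmM a k d hkd ρ hρ hρ₁ hρ₂ hkd_min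
    xstar hxstar
end

section
/- Let 1 ≤ h ≤ n, 0 ≤ m_2 ≤ m_1, 0 ≤ M_2 ≤ M_1 with m_i < M_i for i = 1, 2, and let a be a real number with h·m_1 + (n−h)·m_2 ≤ a ≤ h·M_1 + (n−h)·M_2. Let S_a^[h] = {x ∈ ℝ^n : x_1 ≥ ⋯ ≥ x_n, Σ_{i=1}^n x_i = a, M_1 ≥ x_1 ≥ ⋯ ≥ x_h ≥ m_1, M_2 ≥ x_{h+1} ≥ ⋯ ≥ x_n ≥ m_2} and set a* = h·M_1 + (n−h)·m_2. If a < a*, put k = ⌊(a − h(m_1−m_2) − n·m_2)/(M_1−m_1)⌋; then the vector x* = (M_1 repeated k times, θ, m_1 repeated h−k−1 times, m_2 repeated n−h times), with θ chosen so that the components of x* sum to a, belongs to S_a^[h] and majorizes every x ∈ S_a^[h]. If a ≥ a*, put k = ⌊(a − h(M_1−M_2) − n·m_2)/(M_2−m_2)⌋; then the vector x* = (M_1 repeated h times, M_2 repeated k−h times, θ, m_2 repeated n−k−1 times), with θ chosen so that the components of x* sum to a, belongs to S_a^[h] and majorizes every x ∈ S_a^[h]. -/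
/-!
In both cases `x*` is greedy: before position `k` it sits at the upper bounds (`M₁` on the
first `h` indices, `M₂` after them), after `k` at the lower bounds, and the floor defining `k`
is what puts the remainder `θ` between the two bounds at `k`. Every `x ∈ S_a^{[h]}` lies
between the same bounds and has the same sum, so `x ≤ x*` before `k` and `x ≥ x*` after `k`.
Partial sums up to `k` then compare termwise, and beyond `k` they are the common total minus
tails that compare the other way, which gives `x ⊴ x*`.
-/

open Finset

/-- Membership in the set `S_a^{[h]}`: `x` is nonincreasing, sums to `a`,
the first `h` components lie in `[m₁, M₁]` and the remaining ones in `[m₂, M₂]`.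
(0-indexed.) -/
def memSah (n h : ℕ) (m1 m2 M1 M2 a : ℝ) (x : ℕ → ℝ) : Prop :=
  (∀ i j, i ≤ j → j < n → x j ≤ x i) ∧
  (∑ i ∈ Finset.range n, x i = a) ∧
  (∀ i, i < h → m1 ≤ x i ∧ x i ≤ M1) ∧
  (∀ i, h ≤ i → i < n → m2 ≤ x i ∧ x i ≤ M2)

/-- `y ⊴ x` for vectors of length `n` (0-indexed): all partial sums of `y` up to
`n - 1` are bounded by those of `x` and the total sums coincide. -/
def majorizedBy (n : ℕ) (y x : ℕ → ℝ) : Prop :=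
  (∀ k, 1 ≤ k → k ≤ n - 1 →
    ∑ i ∈ Finset.range k, y i ≤ ∑ i ∈ Finset.range k, x i) ∧
  ∑ i ∈ Finset.range n, y i = ∑ i ∈ Finset.range n, x i

theorem majorizedBy_of_le_of_ge {n k : ℕ} {x y : ℕ → ℝ}
    (h_lt : ∀ i < k, x i ≤ y i) (h_gt : ∀ i, k < i → i < n → y i ≤ x i)
    (hsum : ∑ i ∈ range n, x i = ∑ i ∈ range n, y i) :
    majorizedBy n x y := by
  refine ⟨fun t _ htn => ?_, hsum⟩
  rcases le_or_gt t k with htk | hkt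
  · exact sum_le_sum fun i hi => h_lt i ((mem_range.mp hi).trans_le htk)
  · have htail : ∑ i ∈ Ico t n, y i ≤ ∑ i ∈ Ico t n, x i :=
      sum_le_sum fun i hi => h_gt i (by grind) (mem_Ico.mp hi).2
    have hx := sum_range_add_sum_Ico x (show t ≤ n by omega)
    have hy := sum_range_add_sum_Ico y (show t ≤ n by omega)
    linarith

theorem sum_range_eq_of_four_blocks {f : ℕ → ℝ} {p q r n : ℕ}
    (hpq : p ≤ q) (hqr : q ≤ r) (hrn : r ≤ n) {c₁ c₂ c₃ c₄ : ℝ}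
    (hf : ∀ i, f i = if i < p then c₁ else if i < q then c₂ else if i < r then c₃ else c₄) :
    ∑ i ∈ range n, f i =
      p * c₁ + ((q : ℝ) - p) * c₂ + ((r : ℝ) - q) * c₃ + ((n : ℝ) - r) * c₄ := by
  have block : ∀ {s t : ℕ} {c : ℝ}, (∀ i, s ≤ i → i < t → f i = c) →
      ∑ i ∈ Ico s t, f i = (t - s : ℕ) * c := fun hc => by
    rw [sum_congr rfl fun i hi => hc i (mem_Ico.mp hi).1 (mem_Ico.mp hi).2,
      sum_const, Nat.card_Ico, nsmul_eq_mul]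
  rw [range_eq_Ico, ← sum_Ico_consecutive f (Nat.zero_le r) hrn,
    ← sum_Ico_consecutive f (Nat.zero_le q) hqr, ← sum_Ico_consecutive f (Nat.zero_le p) hpq,
    block (c := c₁), block (c := c₂), block (c := c₃), block (c := c₄),
    Nat.cast_sub hpq, Nat.cast_sub hqr, Nat.cast_sub hrn, Nat.sub_zero]
  all_goals intro i hs ht; rw [hf]; split_ifs <;> first | rfl | omega

theorem floor_div_mul_le_and_lt {N d : ℝ} (hN : 0 ≤ N) (hd : 0 < d) :
    ⌊N / d⌋₊ * d ≤ N ∧ N < (⌊N / d⌋₊ + 1) * d :=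
  ⟨(le_div_iff₀ hd).mp (Nat.floor_le (div_nonneg hN hd.le)),
    (div_lt_iff₀ hd).mp (Nat.lt_floor_add_one _)⟩

section Greedy

variable {n k : ℕ} {lo up x y : ℕ → ℝ} {θ : ℝ}

def greedy (k : ℕ) (lo up : ℕ → ℝ) (θ : ℝ) (i : ℕ) : ℝ :=
  if i < k then up i else if i = k then θ else lo i

theorem greedy_mem_Icc (hle : ∀ i < n, lo i ≤ up i) (hθ : k < n → lo k ≤ θ ∧ θ ≤ up k)
    (hy : ∀ i < n, y i = greedy k lo up θ i) : ∀ i < n, lo i ≤ y i ∧ y i ≤ up i := by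
  intro i hi
  rw [hy i hi, greedy]
  split_ifs with hik hik'
  · exact ⟨hle i hi, le_rfl⟩
  · exact hik' ▸ hθ (by omega)
  · exact ⟨le_rfl, hle i hi⟩

theorem greedy_antitone (hlo : ∀ i j, i ≤ j → j < n → lo j ≤ lo i)
    (hup : ∀ i j, i ≤ j → j < n → up j ≤ up i) (hle : ∀ i < n, lo i ≤ up i)
    (hθ : k < n → lo k ≤ θ ∧ θ ≤ up k) (hy : ∀ i < n, y i = greedy k lo up θ i) :
    ∀ i j, i ≤ j → j < n → y j ≤ y i := by
  intro i j hij hjn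
  have hmem := greedy_mem_Icc hle hθ hy
  rcases lt_or_ge i k with hik | hki
  · rw [hy i (by omega), greedy, if_pos hik]
    exact (hmem j hjn).2.trans (hup i j hij hjn)
  · rcases eq_or_lt_of_le hij with rfl | hij'
    · rfl
    · rw [hy j hjn, greedy, if_neg (by omega), if_neg (by omega)]
      exact (hlo i j hij hjn).trans (hmem i (by omega)).1

theorem majorizedBy_greedy (hx : ∀ i < n, lo i ≤ x i ∧ x i ≤ up i)
    (hy : ∀ i < n, y i = greedy k lo up θ i)
    (hsum : ∑ i ∈ range n, x i = ∑ i ∈ range n, y i) : majorizedBy n x y := by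
  refine majorizedBy_of_le_of_ge (k := min k n) (fun i hi => ?_) (fun i hki hin => ?_) hsum
  · rw [hy i (by omega), greedy, if_pos (by omega)]
    exact (hx i (by omega)).2
  · rw [hy i hin, greedy, if_neg (by omega), if_neg (by omega)]
    exact (hx i hin).1

end Greedy

def stepFun (h : ℕ) (c d : ℝ) (i : ℕ) : ℝ :=
  if i < h then c else d

section StepFun

variable {h : ℕ} {c d c' d' : ℝ}

theorem stepFun_antitone (hdc : d ≤ c) {i j : ℕ} (hij : i ≤ j) :
    stepFun h c d j ≤ stepFun h c d i := by
  unfold stepFun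
  split_ifs <;> first | omega | linarith

theorem stepFun_le_stepFun (hc : c ≤ c') (hd : d ≤ d') (i : ℕ) :
    stepFun h c d i ≤ stepFun h c' d' i := by
  unfold stepFun
  split_ifs <;> assumption

end StepFun

section Sah

variable {n h k : ℕ} {m1 m2 M1 M2 a θ : ℝ} {x y : ℕ → ℝ}

theorem memSah_iff (hhn : h ≤ n) :
    memSah n h m1 m2 M1 M2 a x ↔
      (∀ i j, i ≤ j → j < n → x j ≤ x i) ∧ ∑ i ∈ range n, x i = a ∧
        ∀ i < n, stepFun h m1 m2 i ≤ x i ∧ x i ≤ stepFun h M1 M2 i := by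
  refine and_congr_right fun _ => and_congr_right fun _ => ⟨?_, fun hb => ⟨?_, ?_⟩⟩
  · rintro ⟨hb₁, hb₂⟩ i hi
    unfold stepFun
    split_ifs with hih
    exacts [hb₁ i hih, hb₂ i (not_lt.mp hih) hi]
  · intro i hih
    simpa [stepFun, hih] using hb i (by omega)
  · intro i hhi hi
    simpa [stepFun, not_lt.mpr hhi] using hb i hi

theorem memSah_and_majorizes_of_eq_greedy (hhn : h ≤ n) (hm : m2 ≤ m1) (hM : M2 ≤ M1)
    (hmM1 : m1 ≤ M1) (hmM2 : m2 ≤ M2)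
    (hθ : k < n → stepFun h m1 m2 k ≤ θ ∧ θ ≤ stepFun h M1 M2 k)
    (hy : ∀ i < n, y i = greedy k (stepFun h m1 m2) (stepFun h M1 M2) θ i)
    (hsum : ∑ i ∈ range n, y i = a) :
    memSah n h m1 m2 M1 M2 a y ∧ ∀ x, memSah n h m1 m2 M1 M2 a x → majorizedBy n x y := by
  have hle : ∀ i < n, stepFun h m1 m2 i ≤ stepFun h M1 M2 i :=
    fun i _ => stepFun_le_stepFun hmM1 hmM2 i
  refine ⟨(memSah_iff hhn).mpr ⟨?_, hsum, greedy_mem_Icc hle hθ hy⟩, fun x hx => ?_⟩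
  · exact greedy_antitone (fun i j hij _ => stepFun_antitone hm hij)
      (fun i j hij _ => stepFun_antitone hM hij) hle hθ hy
  · obtain ⟨-, hxsum, hxb⟩ := (memSah_iff hhn).mp hx
    exact majorizedBy_greedy hxb hy (hxsum.trans hsum.symm)

theorem memSah_and_majorizes_of_lt (hhn : h ≤ n) (hm21 : m2 ≤ m1) (hM21 : M2 ≤ M1)
    (hmM1 : m1 < M1) (hmM2 : m2 < M2)
    (ha1 : (h : ℝ) * m1 + ((n : ℝ) - h) * m2 ≤ a)
    (halt : a < (h : ℝ) * M1 + ((n : ℝ) - h) * m2)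
    (hk : k = ⌊(a - h * (m1 - m2) - n * m2) / (M1 - m1)⌋₊)
    (hy : ∀ i, y i = if i < k then M1 else if i = k then θ else if i < h then m1 else m2)
    (hsum : ∑ i ∈ range n, y i = a) :
    memSah n h m1 m2 M1 M2 a y ∧ ∀ x, memSah n h m1 m2 M1 M2 a x → majorizedBy n x y := by
  obtain ⟨hkN, hNk⟩ := floor_div_mul_le_and_lt (N := a - h * (m1 - m2) - n * m2)
    (by linarith) (sub_pos.mpr hmM1)
  rw [← hk] at hkN hNk
  have hkh : k < h := by
    have : (k : ℝ) < h := lt_of_mul_lt_mul_right (by linarith) (sub_pos.mpr hmM1).le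
    exact_mod_cast this
  have hblocks := sum_range_eq_of_four_blocks (f := y) (c₁ := M1) (c₂ := θ) (c₃ := m1)
    (c₄ := m2) k.le_succ hkh hhn (fun i => by rw [hy i]; split_ifs <;> first | rfl | omega)
  push_cast at hblocks
  refine memSah_and_majorizes_of_eq_greedy (k := k) (θ := θ) hhn hm21 hM21 hmM1.le hmM2.le
    (fun _ => ?_) (fun i _ => ?_) hsum
  · -- `θ - m1 = N - k * (M1 - m1)`, where `N` is the numerator in the definition of `k`
    simp only [stepFun, if_pos hkh]
    constructor <;> linarith
  · rw [hy i, greedy, stepFun, stepFun]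
    split_ifs <;> first | rfl | omega

theorem memSah_and_majorizes_of_ge (hhn : h ≤ n) (hm21 : m2 ≤ m1) (hM21 : M2 ≤ M1)
    (hmM1 : m1 < M1) (hmM2 : m2 < M2)
    (hage : (h : ℝ) * M1 + ((n : ℝ) - h) * m2 ≤ a)
    (hk : k = ⌊(a - h * (M1 - M2) - n * m2) / (M2 - m2)⌋₊)
    (hy : ∀ i, y i = if i < h then M1 else if i < k then M2 else if i = k then θ else m2)
    (hsum : ∑ i ∈ range n, y i = a) :
    memSah n h m1 m2 M1 M2 a y ∧ ∀ x, memSah n h m1 m2 M1 M2 a x → majorizedBy n x y := by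
  have hhM : (0 : ℝ) ≤ h * (M2 - m2) := mul_nonneg h.cast_nonneg (sub_pos.mpr hmM2).le
  obtain ⟨hkN, hNk⟩ := floor_div_mul_le_and_lt (N := a - h * (M1 - M2) - n * m2)
    (by linarith) (sub_pos.mpr hmM2)
  rw [← hk] at hkN hNk
  have hhk : h ≤ k := hk ▸ Nat.le_floor ((le_div_iff₀ (sub_pos.mpr hmM2)).mpr (by linarith))
  refine memSah_and_majorizes_of_eq_greedy (k := k) (θ := θ) hhn hm21 hM21 hmM1.le hmM2.le
    (fun hkn => ?_) (fun i _ => ?_) hsum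
  · have hblocks := sum_range_eq_of_four_blocks (f := y) (c₁ := M1) (c₂ := M2) (c₃ := θ)
      (c₄ := m2) hhk k.le_succ hkn (fun i => by rw [hy i]; split_ifs <;> first | rfl | omega)
    push_cast at hblocks
    -- `θ - m2 = N - k * (M2 - m2)`, where `N` is the numerator in the definition of `k`
    simp only [stepFun, if_neg (not_lt.mpr hhk)]
    constructor <;> linarith
  · rw [hy i, greedy, stepFun, stepFun]
    split_ifs <;> first | rfl | omega

end Sah

theorem maximal_element_of_Sah_general (n h : ℕ) (hhn : h ≤ n)
    (m1 m2 M1 M2 : ℝ)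
    (hm21 : m2 ≤ m1) (hM21 : M2 ≤ M1)
    (hmM1 : m1 < M1) (hmM2 : m2 < M2)
    (a : ℝ)
    (ha1 : (h : ℝ) * m1 + ((n : ℝ) - h) * m2 ≤ a) :
    (a < (h : ℝ) * M1 + ((n : ℝ) - h) * m2 →
      ∀ k : ℕ, k = ⌊(a - h * (m1 - m2) - n * m2) / (M1 - m1)⌋₊ →
      ∀ θ : ℝ, ∀ xstar : ℕ → ℝ,
        (∀ i, xstar i =
          if i < k then M1 else if i = k then θ else if i < h then m1 else m2) →
        ∑ i ∈ Finset.range n, xstar i = a →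
        memSah n h m1 m2 M1 M2 a xstar ∧
          ∀ x, memSah n h m1 m2 M1 M2 a x → majorizedBy n x xstar) ∧
    ((h : ℝ) * M1 + ((n : ℝ) - h) * m2 ≤ a →
      ∀ k : ℕ, k = ⌊(a - h * (M1 - M2) - n * m2) / (M2 - m2)⌋₊ →
      ∀ θ : ℝ, ∀ xstar : ℕ → ℝ,
        (∀ i, xstar i =
          if i < h then M1 else if i < k then M2 else if i = k then θ else m2) →
        ∑ i ∈ Finset.range n, xstar i = a →
        memSah n h m1 m2 M1 M2 a xstar ∧
          ∀ x, memSah n h m1 m2 M1 M2 a x → majorizedBy n x xstar) :=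
  ⟨fun halt _ hk _ _ hxstar hsum =>
    memSah_and_majorizes_of_lt hhn hm21 hM21 hmM1 hmM2 ha1 halt hk hxstar hsum,
   fun hage _ hk _ _ hxstar hsum =>
    memSah_and_majorizes_of_ge hhn hm21 hM21 hmM1 hmM2 hage hk hxstar hsum⟩

/-- Corollary 3 in [BCT1]: the maximal element of `S_a^{[h]}` with respect to the
majorization order. -/
theorem maximal_element_of_Sah (n h : ℕ) (hh1 : 1 ≤ h) (hhn : h ≤ n)
    (m1 m2 M1 M2 : ℝ)
    (hm2 : 0 ≤ m2) (hm21 : m2 ≤ m1) (hM2 : 0 ≤ M2) (hM21 : M2 ≤ M1)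
    (hmM1 : m1 < M1) (hmM2 : m2 < M2)
    (a : ℝ)
    (ha1 : (h : ℝ) * m1 + ((n : ℝ) - h) * m2 ≤ a)
    (ha2 : a ≤ (h : ℝ) * M1 + ((n : ℝ) - h) * M2) :
    (a < (h : ℝ) * M1 + ((n : ℝ) - h) * m2 →
      ∀ k : ℕ, k = ⌊(a - h * (m1 - m2) - n * m2) / (M1 - m1)⌋₊ →
      ∀ θ : ℝ, ∀ xstar : ℕ → ℝ,
        (∀ i, xstar i =
          if i < k then M1 else if i = k then θ else if i < h then m1 else m2) →
        ∑ i ∈ Finset.range n, xstar i = a →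
        memSah n h m1 m2 M1 M2 a xstar ∧
          ∀ x, memSah n h m1 m2 M1 M2 a x → majorizedBy n x xstar) ∧
    ((h : ℝ) * M1 + ((n : ℝ) - h) * m2 ≤ a →
      ∀ k : ℕ, k = ⌊(a - h * (M1 - M2) - n * m2) / (M2 - m2)⌋₊ →
      ∀ θ : ℝ, ∀ xstar : ℕ → ℝ,
        (∀ i, xstar i =
          if i < h then M1 else if i < k then M2 else if i = k then θ else m2) →
        ∑ i ∈ Finset.range n, xstar i = a →
        memSah n h m1 m2 M1 M2 a xstar ∧
          ∀ x, memSah n h m1 m2 M1 M2 a x → majorizedBy n x xstar) :=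
  maximal_element_of_Sah_general n h hhn m1 m2 M1 M2 hm21 hM21 hmM1 hmM2 a ha1
end

section
/- Let 1 ≤ h ≤ n, 0 ≤ m_2 ≤ m_1, 0 ≤ M_2 ≤ M_1 with m_i < M_i for i = 1, 2, suppose m_1 ≤ M_2, and let a be a real number with h·m_1 + (n−h)·m_2 ≤ a ≤ h·M_1 + (n−h)·M_2. Let S_a^[h] = {x ∈ ℝ^n : x_1 ≥ ⋯ ≥ x_n, Σ_{i=1}^n x_i = a, M_1 ≥ x_1 ≥ ⋯ ≥ x_h ≥ m_1, M_2 ≥ x_{h+1} ≥ ⋯ ≥ x_n ≥ m_2}. Then the minimal element of S_a^[h] with respect to the majorization order (the vector x_* ∈ S_a^[h] with x_* ⊴ x for all x ∈ S_a^[h]) is: the constant vector (a/n, …, a/n) if m_1 ≤ a/n ≤ M_2; the vector (m_1 repeated h times, (a − h·m_1)/(n−h) repeated n−h times) if a/n < m_1; and the vector ((a − M_2(n−h))/h repeated h times, M_2 repeated n−h times) if a/n > M_2. -/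
/-!
If `x` is nonincreasing, the mean of `x` over an initial part of any block `[j, n)` is at least
its mean over the whole block (every term before the cut dominates every term after it).

Each candidate minimum `y` is a step vector, `u` on the first `h` coordinates and `v ≤ u` on
the rest. For `x ∈ S_a^{[h]}` with `∑_{i<h} x_i ≥ h u`, the averaging over `[0, h)` handles
the partial sums up to `h` and the averaging over the tail `[h, n)` those beyond, so `y ⊴ x`.
The head bound `∑_{i<h} x_i ≥ h u` comes from the averaging itself when `y` is constant,
from `x_i ≥ m₁` when `a/n < m₁` (`u = m₁`), and from `x_i ≤ M₂` on the tail when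
`a/n > M₂` (`v = M₂`).
-/

open Finset

theorem sum_Ico_mul_le_mul_sum_Ico_of_antitoneOn {x : ℕ → ℝ} {j k n : ℕ}
    (hx : AntitoneOn x (Set.Ico j n)) (hjk : j ≤ k) (hkn : k ≤ n) :
    ((k : ℝ) - j) * ∑ i ∈ Ico j n, x i ≤ ((n : ℝ) - j) * ∑ i ∈ Ico j k, x i := by
  have hpairs : 0 ≤ ∑ i ∈ Ico j k, ∑ l ∈ Ico k n, (x i - x l) :=
    sum_nonneg fun i hi => sum_nonneg fun l hl => by
      simp only [mem_Ico] at hi hl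
      exact sub_nonneg.2 (hx ⟨hi.1, by omega⟩ ⟨by omega, hl.2⟩ (by omega))
  simp only [sum_sub_distrib, sum_const, Nat.card_Ico, nsmul_eq_mul, ← mul_sum,
    Nat.cast_sub hjk, Nat.cast_sub hkn] at hpairs
  rw [← sum_Ico_consecutive x hjk hkn]
  nlinarith

theorem mul_sum_range_le_of_antitoneOn {x : ℕ → ℝ} {k n : ℕ}
    (hx : AntitoneOn x (Set.Iio n)) (hkn : k ≤ n) :
    (k : ℝ) * ∑ i ∈ range n, x i ≤ n * ∑ i ∈ range k, x i := by
  have hIco : AntitoneOn x (Set.Ico 0 n) := hx.mono Set.Ico_subset_Iio_self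
  simpa using sum_Ico_mul_le_mul_sum_Ico_of_antitoneOn hIco (Nat.zero_le k) hkn

section Step

variable {h : ℕ} {u v : ℝ}

theorem sum_range_ite_lt_of_le {k : ℕ} (hkh : k ≤ h) :
    ∑ i ∈ range k, (if i < h then u else v) = k * u := by
  rw [sum_congr rfl fun i hi => if_pos ((mem_range.1 hi).trans_le hkh)]
  simp

theorem sum_range_ite_lt_of_ge {k : ℕ} (hhk : h ≤ k) :
    ∑ i ∈ range k, (if i < h then u else v) = h * u + ((k : ℝ) - h) * v := by
  rw [← sum_range_add_sum_Ico _ hhk, sum_range_ite_lt_of_le le_rfl,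
    sum_congr rfl fun i hi => if_neg (mem_Ico.1 hi).1.not_gt]
  simp [Nat.cast_sub hhk]

end Step

theorem majorizedBy_of_ite {x y : ℕ → ℝ} {n h : ℕ} {u v : ℝ}
    (hx : AntitoneOn x (Set.Iio n)) (hhn : h ≤ n) (hy : ∀ i, y i = if i < h then u else v)
    (hsum : ∑ i ∈ range n, y i = ∑ i ∈ range n, x i)
    (hhead : h * u ≤ ∑ i ∈ range h, x i) :
    majorizedBy n y x := by
  refine ⟨fun k _ hk => ?_, hsum⟩
  simp only [hy] at hsum ⊢
  rcases le_total k h with hkh | hhk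
  · rw [sum_range_ite_lt_of_le hkh]
    obtain rfl | hh := Nat.eq_zero_or_pos h
    · simp [Nat.le_zero.1 hkh]
    have havg := mul_sum_range_le_of_antitoneOn (hx.mono (Set.Iio_subset_Iio hhn)) hkh
    have hh' : (0 : ℝ) < h := Nat.cast_pos.2 hh
    refine le_of_mul_le_mul_left ?_ hh'
    nlinarith [mul_le_mul_of_nonneg_left hhead (Nat.cast_nonneg k : (0 : ℝ) ≤ k)]
  · rw [sum_range_ite_lt_of_ge hhk]
    rw [sum_range_ite_lt_of_ge hhn, ← sum_range_add_sum_Ico x hhn] at hsum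
    obtain rfl | hhk := eq_or_lt_of_le hhk
    · simpa using hhead
    have havg := sum_Ico_mul_le_mul_sum_Ico_of_antitoneOn
      (hx.mono Set.Ico_subset_Iio_self) hhk.le (by omega : k ≤ n)
    rw [← sum_range_add_sum_Ico x hhk.le]
    have hkn : (k : ℝ) ≤ n := by exact_mod_cast (by omega : k ≤ n)
    have hnh : (0 : ℝ) < n - h := by
      rw [sub_pos]; exact_mod_cast (by omega : h < n)
    refine le_of_mul_le_mul_left ?_ hnh
    nlinarith [mul_le_mul_of_nonneg_left hhead (sub_nonneg.2 hkn)]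

theorem memSah.antitoneOn {n h : ℕ} {m1 m2 M1 M2 a : ℝ} {x : ℕ → ℝ}
    (hx : memSah n h m1 m2 M1 M2 a x) : AntitoneOn x (Set.Iio n) :=
  fun i _ j hj hij => hx.1 i j hij hj

theorem memSah_ite {n h : ℕ} {m1 m2 M1 M2 a u v : ℝ} {y : ℕ → ℝ}
    (hy : ∀ i, y i = if i < h then u else v) (hhn : h ≤ n) (hvu : v ≤ u)
    (hu : m1 ≤ u ∧ u ≤ M1) (hv : m2 ≤ v ∧ v ≤ M2) (ha : h * u + ((n : ℝ) - h) * v = a) :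
    memSah n h m1 m2 M1 M2 a y := by
  refine ⟨fun i j hij _ => ?_, ?_, fun i hi => ?_, fun i hi _ => ?_⟩
  · rw [hy, hy]
    split_ifs <;> first | exact le_rfl | exact hvu | omega
  · simp only [hy, sum_range_ite_lt_of_ge hhn, ha]
  · rwa [hy, if_pos hi]
  · rwa [hy, if_neg (not_lt.2 hi)]

def IsLeastForMajorization (n h : ℕ) (m1 m2 M1 M2 a : ℝ) (y : ℕ → ℝ) : Prop :=
  memSah n h m1 m2 M1 M2 a y ∧ ∀ x, memSah n h m1 m2 M1 M2 a x → majorizedBy n y x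

section Least

variable {n h : ℕ} {m1 m2 M1 M2 a : ℝ}

theorem isLeastForMajorization_ite {u v : ℝ} {y : ℕ → ℝ}
    (hy : ∀ i, y i = if i < h then u else v) (hhn : h ≤ n) (hvu : v ≤ u)
    (hu : m1 ≤ u ∧ u ≤ M1) (hv : m2 ≤ v ∧ v ≤ M2) (ha : h * u + ((n : ℝ) - h) * v = a)
    (hhead : ∀ x, memSah n h m1 m2 M1 M2 a x → h * u ≤ ∑ i ∈ range h, x i) :
    IsLeastForMajorization n h m1 m2 M1 M2 a y := by
  have hyS := memSah_ite hy hhn hvu hu hv ha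
  exact ⟨hyS, fun x hx =>
    majorizedBy_of_ite hx.antitoneOn hhn hy (hyS.2.1.trans hx.2.1.symm) (hhead x hx)⟩

theorem isLeastForMajorization_const (hh : 0 < h) (hhn : h ≤ n) (hm21 : m2 ≤ m1)
    (hM21 : M2 ≤ M1) (hm1 : m1 ≤ a / n) (hM2 : a / n ≤ M2) {y : ℕ → ℝ}
    (hy : ∀ i, y i = a / n) :
    IsLeastForMajorization n h m1 m2 M1 M2 a y := by
  have hn : (0 : ℝ) < n := Nat.cast_pos.2 (hh.trans_le hhn)
  refine isLeastForMajorization_ite (u := a / n) (fun i => by rw [hy, ite_self]) hhn le_rfl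
    ⟨hm1, hM2.trans hM21⟩ ⟨hm21.trans hm1, hM2⟩ (by field_simp; ring) fun x hx => ?_
  have havg := mul_sum_range_le_of_antitoneOn hx.antitoneOn hhn
  rw [hx.2.1] at havg
  rw [← mul_div_assoc, div_le_iff₀ hn]
  linarith

theorem isLeastForMajorization_of_lt (hh : 0 < h) (hhn : h ≤ n) (hmM1 : m1 < M1)
    (hm1M2 : m1 ≤ M2) (ha1 : (h : ℝ) * m1 + ((n : ℝ) - h) * m2 ≤ a) (ha : a / n < m1)
    {y : ℕ → ℝ} (hy : ∀ i, y i = if i < h then m1 else (a - h * m1) / ((n : ℝ) - h)) :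
    IsLeastForMajorization n h m1 m2 M1 M2 a y := by
  have hn : (0 : ℝ) < n := Nat.cast_pos.2 (hh.trans_le hhn)
  rw [div_lt_iff₀ hn] at ha
  have hnh : (0 : ℝ) < n - h := by
    obtain rfl | hhn := eq_or_lt_of_le hhn
    · simp only [sub_self, zero_mul, add_zero] at ha1
      linarith
    · rw [sub_pos]; exact_mod_cast hhn
  have hc : (a - h * m1) / ((n : ℝ) - h) ≤ m1 := by
    rw [div_le_iff₀ hnh]; linarith
  have hc2 : m2 ≤ (a - h * m1) / ((n : ℝ) - h) := by
    rw [le_div_iff₀ hnh]; linarith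
  refine isLeastForMajorization_ite hy hhn hc ⟨le_rfl, hmM1.le⟩ ⟨hc2, hc.trans hm1M2⟩
    (by field_simp; ring) fun x hx => ?_
  simpa using card_nsmul_le_sum _ x m1 fun i hi => (hx.2.2.1 i (mem_range.1 hi)).1

theorem isLeastForMajorization_of_gt (hh : 0 < h) (hhn : h ≤ n) (hmM2 : m2 < M2)
    (hm1M2 : m1 ≤ M2) (ha2 : a ≤ (h : ℝ) * M1 + ((n : ℝ) - h) * M2) (ha : M2 < a / n)
    {y : ℕ → ℝ} (hy : ∀ i, y i = if i < h then (a - M2 * ((n : ℝ) - h)) / h else M2) :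
    IsLeastForMajorization n h m1 m2 M1 M2 a y := by
  have hn : (0 : ℝ) < n := Nat.cast_pos.2 (hh.trans_le hhn)
  have hh' : (0 : ℝ) < h := Nat.cast_pos.2 hh
  rw [lt_div_iff₀ hn] at ha
  have hd : M2 ≤ (a - M2 * ((n : ℝ) - h)) / h := by
    rw [le_div_iff₀ hh']; linarith
  refine isLeastForMajorization_ite hy hhn hd ⟨hm1M2.trans hd, ?_⟩ ⟨hmM2.le, le_rfl⟩
    (by field_simp; ring) fun x hx => ?_
  · rw [div_le_iff₀ hh']; linarith
  have htail : ∑ i ∈ Ico h n, x i ≤ ((n : ℝ) - h) * M2 := by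
    simpa [Nat.cast_sub hhn] using
      sum_le_card_nsmul _ x M2 fun i hi => (hx.2.2.2 i (mem_Ico.1 hi).1 (mem_Ico.1 hi).2).2
  have hsplit := sum_range_add_sum_Ico x hhn
  rw [hx.2.1] at hsplit
  rw [mul_div_cancel₀ _ hh'.ne']
  linarith

end Least

theorem minimal_element_of_Sah_general (n h : ℕ) (hh1 : 1 ≤ h) (hhn : h ≤ n)
    (m1 m2 M1 M2 : ℝ)
    (hm21 : m2 ≤ m1) (hM21 : M2 ≤ M1)
    (hmM1 : m1 < M1) (hmM2 : m2 < M2) (hm1M2 : m1 ≤ M2)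
    (a : ℝ)
    (ha1 : (h : ℝ) * m1 + ((n : ℝ) - h) * m2 ≤ a)
    (ha2 : a ≤ (h : ℝ) * M1 + ((n : ℝ) - h) * M2) :
    (m1 ≤ a / n → a / n ≤ M2 →
      ∀ xmin : ℕ → ℝ, (∀ i, xmin i = a / n) →
        memSah n h m1 m2 M1 M2 a xmin ∧
          ∀ x, memSah n h m1 m2 M1 M2 a x → majorizedBy n xmin x) ∧
    (a / n < m1 →
      ∀ xmin : ℕ → ℝ,
        (∀ i, xmin i = if i < h then m1 else (a - h * m1) / ((n : ℝ) - h)) →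
        memSah n h m1 m2 M1 M2 a xmin ∧
          ∀ x, memSah n h m1 m2 M1 M2 a x → majorizedBy n xmin x) ∧
    (M2 < a / n →
      ∀ xmin : ℕ → ℝ,
        (∀ i, xmin i = if i < h then (a - M2 * ((n : ℝ) - h)) / h else M2) →
        memSah n h m1 m2 M1 M2 a xmin ∧
          ∀ x, memSah n h m1 m2 M1 M2 a x → majorizedBy n xmin x) := by
  exact ⟨fun hm1a haM2 _ hy => isLeastForMajorization_const hh1 hhn hm21 hM21 hm1a haM2 hy,
    fun ha _ hy => isLeastForMajorization_of_lt hh1 hhn hmM1 hm1M2 ha1 ha hy,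
    fun ha _ hy => isLeastForMajorization_of_gt hh1 hhn hmM2 hm1M2 ha2 ha hy⟩

/-- Corollary 10 in [BCT1] (case `m₁ ≤ M₂`): the minimal element of `S_a^{[h]}`
with respect to the majorization order. -/
theorem minimal_element_of_Sah (n h : ℕ) (hh1 : 1 ≤ h) (hhn : h ≤ n)
    (m1 m2 M1 M2 : ℝ)
    (hm2 : 0 ≤ m2) (hm21 : m2 ≤ m1) (hM2 : 0 ≤ M2) (hM21 : M2 ≤ M1)
    (hmM1 : m1 < M1) (hmM2 : m2 < M2) (hm1M2 : m1 ≤ M2)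
    (a : ℝ)
    (ha1 : (h : ℝ) * m1 + ((n : ℝ) - h) * m2 ≤ a)
    (ha2 : a ≤ (h : ℝ) * M1 + ((n : ℝ) - h) * M2) :
    (m1 ≤ a / n → a / n ≤ M2 →
      ∀ xmin : ℕ → ℝ, (∀ i, xmin i = a / n) →
        memSah n h m1 m2 M1 M2 a xmin ∧
          ∀ x, memSah n h m1 m2 M1 M2 a x → majorizedBy n xmin x) ∧
    (a / n < m1 →
      ∀ xmin : ℕ → ℝ,
        (∀ i, xmin i = if i < h then m1 else (a - h * m1) / ((n : ℝ) - h)) →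
        memSah n h m1 m2 M1 M2 a xmin ∧
          ∀ x, memSah n h m1 m2 M1 M2 a x → majorizedBy n xmin x) ∧
    (M2 < a / n →
      ∀ xmin : ℕ → ℝ,
        (∀ i, xmin i = if i < h then (a - M2 * ((n : ℝ) - h)) / h else M2) →
        memSah n h m1 m2 M1 M2 a xmin ∧
          ∀ x, memSah n h m1 m2 M1 M2 a x → majorizedBy n xmin x) :=
  minimal_element_of_Sah_general n h hh1 hhn m1 m2 M1 M2 hm21 hM21 hmM1 hmM2 hm1M2 a ha1 ha2
end

section
/- Positive integers n−1 ≥ d_1 ≥ d_2 ≥ ⋯ ≥ d_n are the vertex degree sequence of a unicyclic graph (a connected simple graph on n vertices with n edges) if and only if n ≥ 3, Σ_{i=1}^n d_i = 2n, and at least three of the d_i are greater than or equal to 2 (i.e. d_3 ≥ 2). -/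
/-- `d` (0-indexed) is the degree sequence of `G`: some relabelling of the
vertices realizes the degrees `d 0, …, d (n-1)`. -/
def IsDegreeSequence {n : ℕ} (G : SimpleGraph (Fin n)) (d : ℕ → ℕ) : Prop :=
  ∃ σ : Equiv.Perm (Fin n), ∀ i : Fin n, (G.neighborSet (σ i)).ncard = d (i : ℕ)

/-!
The degrees of a graph with `n` edges sum to `2n`. If at most two vertices `u, v` had degree
at least `2`, every edge other than `uv` would contain a vertex of degree at most one outside `{u, v}`,
and distinct edges would get distinct such vertices, leaving at most `1 + (n - 2)` edges.

Conversely, a degree function `f` with values `≥ 1`, sum `2n` and at least three values `≥ 2` is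
realized by induction on `n`. If every value is `2`, take an `n`-cycle. Otherwise some `f ℓ = 1`,
so, the average being `2`, some `f t ≥ 3`; deleting `ℓ` and lowering `f t` by one keeps all three
conditions, and attaching `ℓ` as a leaf to `t` in a realization of the smaller function gives
a realization of `f`.
-/

open Finset

namespace SimpleGraph

variable {V : Type*}

lemma ncard_neighborSet_eq_degree [Fintype V] (G : SimpleGraph V) [DecidableRel G.Adj] (v : V) :
    (G.neighborSet v).ncard = G.degree v := by
  rw [← card_neighborSet_eq_degree, Set.ncard_eq_toFinset_card', Set.toFinset_card]

lemma ncard_edgeSet_eq_card_edgeFinset (G : SimpleGraph V) [Fintype G.edgeSet] :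
    G.edgeSet.ncard = #G.edgeFinset := by
  rw [edgeFinset_card, Set.ncard_eq_toFinset_card', Set.toFinset_card]

section EdgeCount

variable [Fintype V] (G : SimpleGraph V) [DecidableRel G.Adj]

lemma card_edgeFinset_le_one_add_sum_degree [DecidableEq V] (u v : V) :
    #G.edgeFinset ≤ 1 + ∑ w ∈ {u, v}ᶜ, G.degree w := by
  set outer : Finset (Sym2 V) :=
    ({u, v}ᶜ : Finset V).biUnion fun w => G.incidenceFinset w
  have hcover : G.edgeFinset ⊆ insert s(u, v) outer := by
    intro e he
    induction e using Sym2.ind with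
    | _ x y =>
      have hxy : G.Adj x y := by simpa using he
      simp only [outer, mem_insert, mem_biUnion, mem_compl, mem_singleton, mem_incidenceFinset]
      by_cases hx : x = u ∨ x = v
      · by_cases hy : y = u ∨ y = v
        · left
          have := hxy.ne
          rcases hx with rfl | rfl <;> rcases hy with rfl | rfl <;> simp_all [Sym2.eq_swap]
        · exact Or.inr ⟨y, hy, G.mk'_mem_incidenceSet_right_iff.mpr hxy⟩
      · exact Or.inr ⟨x, hx, G.mk'_mem_incidenceSet_left_iff.mpr hxy⟩
  calc #G.edgeFinset ≤ #(insert s(u, v) outer) := card_le_card hcover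
    _ ≤ #outer + 1 := card_insert_le _ _
    _ = 1 + #outer := add_comm _ _
    _ ≤ 1 + ∑ w ∈ {u, v}ᶜ, G.degree w := by
        gcongr
        exact card_biUnion_le.trans_eq
          (sum_congr rfl fun w _ => G.card_incidenceFinset_eq_degree w)

lemma card_edgeFinset_lt_card_of_degree_le_one {u v : V} (huv : u ≠ v)
    (h : ∀ w, w ≠ u → w ≠ v → G.degree w ≤ 1) : #G.edgeFinset < Fintype.card V := by
  classical
  have hpair : #({u, v} : Finset V) = 2 := card_pair huv
  have hsum : ∑ w ∈ {u, v}ᶜ, G.degree w ≤ Fintype.card V - 2 := by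
    calc ∑ w ∈ {u, v}ᶜ, G.degree w ≤ ∑ _w ∈ ({u, v}ᶜ : Finset V), 1 :=
          sum_le_sum fun w hw => by
            simp only [mem_compl, mem_insert, mem_singleton, not_or] at hw
            exact h w hw.1 hw.2
      _ = Fintype.card V - 2 := by rw [sum_const, smul_eq_mul, mul_one, card_compl, hpair]
  have : 2 ≤ Fintype.card V := hpair ▸ card_le_univ _
  have := G.card_edgeFinset_le_one_add_sum_degree u v
  omega

lemma three_le_card_of_card_le_card_edgeFinset [Nonempty V]
    (h : Fintype.card V ≤ #G.edgeFinset) : 3 ≤ Fintype.card V := by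
  have hchoose := h.trans G.card_edgeFinset_le_card_choose_two
  have := Fintype.card_pos (α := V)
  by_contra! hlt
  interval_cases Fintype.card V <;> simp at hchoose

end EdgeCount

lemma exists_connected_forall_ncard_neighborSet_eq_two [Fintype V] (h : 3 ≤ Fintype.card V) :
    ∃ G : SimpleGraph V, G.Connected ∧ ∀ v, (G.neighborSet v).ncard = 2 := by
  obtain ⟨m, hm⟩ : ∃ m, Fintype.card V = m + 3 := ⟨Fintype.card V - 3, by omega⟩
  let e : Fin (m + 3) ≃ V := (Fintype.equivFinOfCardEq hm).symm
  refine ⟨(cycleGraph (m + 3)).map e.toEmbedding,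
    cycleGraph_connected.map (Embedding.map _ _).toHom e.surjective, fun v => ?_⟩
  rw [← e.apply_symm_apply v, ← Equiv.coe_toEmbedding, neighborSet_map,
    Set.ncard_image_of_injective _ e.toEmbedding.injective, ncard_neighborSet_eq_degree,
    cycleGraph_degree_three_le]

lemma neighborSet_map_eq_empty_of_notMem_range {W : Type*} (G : SimpleGraph V) (f : V ↪ W)
    {w : W} (hw : w ∉ Set.range f) : (G.map f).neighborSet w = ∅ :=
  Set.eq_empty_of_forall_notMem fun _ ⟨_, a, _, _, ha, _⟩ => hw ⟨a, ha⟩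

lemma neighborSet_sup_edge_left (G : SimpleGraph V) {s t : V} (hst : s ≠ t) :
    (G ⊔ edge s t).neighborSet s = insert t (G.neighborSet s) := by
  ext x
  simp only [mem_neighborSet, sup_adj, edge_adj, Set.mem_insert_iff]
  grind

lemma neighborSet_sup_edge_of_ne (G : SimpleGraph V) {s t x : V} (hs : x ≠ s) (ht : x ≠ t) :
    (G ⊔ edge s t).neighborSet x = G.neighborSet x := by
  ext y
  simp only [mem_neighborSet, sup_adj, edge_adj]
  grind

section AttachLeaf

def attachLeaf {ℓ : V} (G : SimpleGraph {x // x ≠ ℓ}) (t : V) : SimpleGraph V :=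
  G.map (Function.Embedding.subtype _) ⊔ edge ℓ t

variable {ℓ t : V} (G : SimpleGraph {x // x ≠ ℓ})

lemma attachLeaf_connected (ht : t ≠ ℓ) (hG : G.Connected) : (G.attachLeaf t).Connected := by
  refine (connected_iff_exists_forall_reachable _).2 ⟨t, fun w => ?_⟩
  by_cases hw : w = ℓ
  · subst hw
    exact Adj.reachable (by simp [attachLeaf, edge_adj, ht])
  · let φ : G →g G.attachLeaf t := (Hom.ofLE le_sup_left).comp (Embedding.map _ G).toHom
    exact (hG.preconnected ⟨t, ht⟩ ⟨w, hw⟩).map φ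

lemma ncard_neighborSet_attachLeaf_self (ht : t ≠ ℓ) :
    ((G.attachLeaf t).neighborSet ℓ).ncard = 1 := by
  rw [attachLeaf, neighborSet_sup_edge_left _ ht.symm,
    neighborSet_map_eq_empty_of_notMem_range _ _ (by simp), insert_empty_eq, Set.ncard_singleton]

lemma ncard_neighborSet_attachLeaf [Finite V] [DecidableEq V] (x : {x // x ≠ ℓ}) :
    ((G.attachLeaf t).neighborSet x).ncard =
      (G.neighborSet x).ncard + if (x : V) = t then 1 else 0 := by
  have himage : (G.map (Function.Embedding.subtype _)).neighborSet x =
      Subtype.val '' G.neighborSet x :=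
    neighborSet_map _ _ _
  split_ifs with hxt
  · rw [attachLeaf, edge_comm, ← hxt, neighborSet_sup_edge_left _ x.2, Set.ncard_insert_of_notMem,
      himage, Set.ncard_image_of_injective _ Subtype.val_injective]
    rw [himage]
    rintro ⟨y, -, hy⟩
    exact y.2 hy
  · rw [attachLeaf, neighborSet_sup_edge_of_ne _ x.2 hxt, himage,
      Set.ncard_image_of_injective _ Subtype.val_injective, add_zero]

end AttachLeaf

section DegreeFunction

variable [Fintype V] {f : V → ℕ}

lemma forall_eq_two_of_sum_eq (hsum : ∑ v, f v = 2 * Fintype.card V) (h : ∀ v, 2 ≤ f v) (v : V) :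
    f v = 2 :=
  ((sum_eq_sum_iff_of_le fun v _ => h v).1 (by simp [hsum, mul_comm]) v (mem_univ v)).symm

lemma exists_three_le_of_sum_eq (hsum : ∑ v, f v = 2 * Fintype.card V) {ℓ : V} (hℓ : f ℓ < 2) :
    ∃ t, 3 ≤ f t := by
  by_contra! hsmall
  have : ∑ v, f v < ∑ _v : V, 2 :=
    sum_lt_sum (fun v _ => Nat.le_of_lt_succ (hsmall v)) ⟨ℓ, mem_univ _, hℓ⟩
  simp [hsum, mul_comm] at this

end DegreeFunction

section LeafReduction

variable [DecidableEq V] (f : V → ℕ) {ℓ t : V}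

/-- The degree function left after deleting a leaf `ℓ` attached to `t`. -/
def leafReduction (f : V → ℕ) (ℓ t : V) : {x // x ≠ ℓ} → ℕ :=
  fun x => f x - if (x : V) = t then 1 else 0

lemma leafReduction_add_ite (hft : 1 ≤ f t) (x : {x // x ≠ ℓ}) :
    leafReduction f ℓ t x + (if (x : V) = t then 1 else 0) = f x := by
  simp only [leafReduction]
  split_ifs with h
  · subst h; omega
  · rfl

lemma le_leafReduction {k : ℕ} (ht : k < f t) {x : {x // x ≠ ℓ}} (hx : k ≤ f x) :
    k ≤ leafReduction f ℓ t x := by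
  simp only [leafReduction]
  split_ifs with h
  · subst h; omega
  · exact hx

lemma sum_leafReduction [Fintype V] (ht : t ≠ ℓ) (hft : 1 ≤ f t) :
    ∑ x, leafReduction f ℓ t x + f ℓ + 1 = ∑ v, f v := by
  have hind : ∑ x : {x // x ≠ ℓ}, (if (x : V) = t then 1 else 0) = 1 := by
    rw [Fintype.sum_eq_single ⟨t, ht⟩ fun x hx => if_neg fun h => hx (Subtype.ext h), if_pos rfl]
  rw [Fintype.sum_eq_add_sum_subtype_ne _ ℓ,
    ← sum_congr rfl fun x _ => leafReduction_add_ite f hft x, sum_add_distrib, hind]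
  ring

lemma exists_three_two_le_leafReduction (hℓ : f ℓ < 2) (ht : 3 ≤ f t)
    (hthree : ∃ a b c, a ≠ b ∧ a ≠ c ∧ b ≠ c ∧ 2 ≤ f a ∧ 2 ≤ f b ∧ 2 ≤ f c) :
    ∃ a b c, a ≠ b ∧ a ≠ c ∧ b ≠ c ∧
      2 ≤ leafReduction f ℓ t a ∧ 2 ≤ leafReduction f ℓ t b ∧ 2 ≤ leafReduction f ℓ t c := by
  have hne : ∀ v, 2 ≤ f v → v ≠ ℓ := by rintro v hv rfl; omega
  obtain ⟨a, b, c, hab, hac, hbc, ha, hb, hc⟩ := hthree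
  exact ⟨⟨a, hne a ha⟩, ⟨b, hne b hb⟩, ⟨c, hne c hc⟩, by simpa using hab, by simpa using hac,
    by simpa using hbc, le_leafReduction f (by omega) ha, le_leafReduction f (by omega) hb,
    le_leafReduction f (by omega) hc⟩

end LeafReduction

theorem exists_connected_ncard_neighborSet_eq [Fintype V] (f : V → ℕ) (hpos : ∀ v, 1 ≤ f v)
    (hsum : ∑ v, f v = 2 * Fintype.card V)
    (hthree : ∃ a b c, a ≠ b ∧ a ≠ c ∧ b ≠ c ∧ 2 ≤ f a ∧ 2 ≤ f b ∧ 2 ≤ f c) :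
    ∃ G : SimpleGraph V, G.Connected ∧ ∀ v, (G.neighborSet v).ncard = f v := by
  classical
  induction hn : Fintype.card V generalizing V with
  | zero =>
    obtain ⟨a, -⟩ := hthree
    have := Fintype.card_pos_iff.2 ⟨a⟩
    omega
  | succ n ih =>
    by_cases hleaf : ∃ ℓ, f ℓ < 2
    · obtain ⟨ℓ, hℓ⟩ := hleaf
      obtain ⟨t, ht⟩ := exists_three_le_of_sum_eq hsum hℓ
      have htℓ : t ≠ ℓ := by rintro rfl; omega
      have hcard : Fintype.card {x // x ≠ ℓ} = n := by
        simp [Fintype.card_subtype_compl, hn]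
      have hsum' : ∑ x, leafReduction f ℓ t x = 2 * Fintype.card {x // x ≠ ℓ} := by
        have := sum_leafReduction f htℓ (by omega)
        have := hpos ℓ
        omega
      obtain ⟨G, hG, hdeg⟩ := ih (leafReduction f ℓ t)
        (fun x => le_leafReduction f (by omega) (hpos x)) hsum'
        (exists_three_two_le_leafReduction f hℓ ht hthree) hcard
      refine ⟨G.attachLeaf t, G.attachLeaf_connected htℓ hG, fun v => ?_⟩
      rcases eq_or_ne v ℓ with rfl | hvℓ
      · rw [ncard_neighborSet_attachLeaf_self _ htℓ]
        have := hpos v; omega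
      · lift v to {x // x ≠ ℓ} using hvℓ
        rw [ncard_neighborSet_attachLeaf, hdeg, leafReduction_add_ite f (by omega)]
    · push Not at hleaf
      obtain ⟨a, b, c, hab, hac, hbc, -⟩ := hthree
      obtain ⟨G, hG, hdeg⟩ := exists_connected_forall_ncard_neighborSet_eq_two
        (Fintype.two_lt_card_iff.2 ⟨a, b, c, hab, hac, hbc⟩)
      exact ⟨G, hG, fun v => by rw [hdeg, forall_eq_two_of_sum_eq hsum hleaf]⟩

end SimpleGraph

namespace IsDegreeSequence

variable {n : ℕ} {G : SimpleGraph (Fin n)} {d : ℕ → ℕ}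

lemma sum_range_eq (h : IsDegreeSequence G d) : ∑ i ∈ range n, d i = 2 * G.edgeSet.ncard := by
  classical
  obtain ⟨σ, hσ⟩ := h
  rw [← Fin.sum_univ_eq_sum_range, ← Fintype.sum_congr _ _ hσ,
    Equiv.sum_comp σ fun v => (G.neighborSet v).ncard, G.ncard_edgeSet_eq_card_edgeFinset,
    ← G.sum_degrees_eq_twice_card_edges]
  exact sum_congr rfl fun v _ => G.ncard_neighborSet_eq_degree v

lemma two_le_apply_two (h : IsDegreeSequence G d) (hmono : ∀ i j, i ≤ j → j < n → d j ≤ d i)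
    (hn : 3 ≤ n) (hedge : n ≤ G.edgeSet.ncard) : 2 ≤ d 2 := by
  classical
  obtain ⟨σ, hσ⟩ := h
  by_contra! hd2
  refine (G.card_edgeFinset_lt_card_of_degree_le_one (u := σ ⟨0, by omega⟩)
    (v := σ ⟨1, by omega⟩) (by simp [Fin.ext_iff]) fun w hw0 hw1 => ?_).not_ge ?_
  · have hi : 2 ≤ (σ.symm w : ℕ) := by
      by_contra! hi
      interval_cases hi' : (σ.symm w : ℕ)
      · exact hw0 (σ.symm_apply_eq.1 (Fin.ext hi'))
      · exact hw1 (σ.symm_apply_eq.1 (Fin.ext hi'))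
    rw [← G.ncard_neighborSet_eq_degree, ← σ.apply_symm_apply w, hσ]
    exact (hmono 2 _ hi (σ.symm w).2).trans (by omega)
  · rwa [← G.ncard_edgeSet_eq_card_edgeFinset, Fintype.card_fin]

end IsDegreeSequence

theorem unicyclic_degree_sequence_characterization_general (n : ℕ) (d : ℕ → ℕ)
    (hpos : ∀ i, i < n → 1 ≤ d i)
    (hmono : ∀ i j, i ≤ j → j < n → d j ≤ d i) :
    (∃ G : SimpleGraph (Fin n),
        G.Connected ∧ G.edgeSet.ncard = n ∧ IsDegreeSequence G d) ↔
      (3 ≤ n ∧ ∑ i ∈ Finset.range n, d i = 2 * n ∧ 2 ≤ d 2) := by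
  constructor
  · rintro ⟨G, hG, hedge, hdeg⟩
    have hn : 3 ≤ n := by
      classical
      have := hG.nonempty
      simpa using G.three_le_card_of_card_le_card_edgeFinset
        (by rw [← G.ncard_edgeSet_eq_card_edgeFinset, hedge, Fintype.card_fin])
    exact ⟨hn, hdeg.sum_range_eq.trans (by rw [hedge]), hdeg.two_le_apply_two hmono hn hedge.ge⟩
  · rintro ⟨hn, hsum, hd2⟩
    obtain ⟨G, hG, hnbr⟩ :=
      SimpleGraph.exists_connected_ncard_neighborSet_eq (fun i : Fin n => d i) (fun i => hpos i i.2)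
        (by simpa [Fin.sum_univ_eq_sum_range] using hsum)
        ⟨⟨0, by omega⟩, ⟨1, by omega⟩, ⟨2, hn⟩, by simp, by simp, by simp,
          hd2.trans (hmono 0 2 (by omega) hn), hd2.trans (hmono 1 2 (by omega) hn), hd2⟩
    have hdeg : IsDegreeSequence G d := ⟨1, hnbr⟩
    exact ⟨G, hG, by have := hdeg.sum_range_eq; omega, hdeg⟩

/-- Characterization of degree sequences of unicyclic graphs. -/
theorem unicyclic_degree_sequence_characterization (n : ℕ) (d : ℕ → ℕ)
    (hpos : ∀ i, i < n → 1 ≤ d i)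
    (hub : ∀ i, i < n → d i ≤ n - 1)
    (hmono : ∀ i j, i ≤ j → j < n → d j ≤ d i) :
    (∃ G : SimpleGraph (Fin n),
        G.Connected ∧ G.edgeSet.ncard = n ∧ IsDegreeSequence G d) ↔
      (3 ≤ n ∧ ∑ i ∈ Finset.range n, d i = 2 * n ∧ 2 ≤ d 2) :=
  unicyclic_degree_sequence_characterization_general n d hpos hmono
end

section
/- Let G be a bicyclic graph (a connected simple graph on n ≥ 4 vertices with n+1 edges) with degree sequence d_1 ≥ d_2 ≥ ⋯ ≥ d_n. Then the vector (3, 3, 2, …, 2) (with n−2 trailing twos) is majorized by (d_1, …, d_n), and (d_1, …, d_n) is majorized by the vector (n−1, 3, 2, 2, 1, …, 1) (with n−4 trailing ones), where majorization means the corresponding partial-sum inequalities Σ_{i=1}^k y_i ≤ Σ_{i=1}^k x_i for k = 1, …, n−1 together with equal total sums 2(n+1). -/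
/-!
The degrees sum to `2(n+1)`. As the degree sequence is nonincreasing, for each `k` either its
first `k` terms are all at least `3` or the remaining `n - k` terms are all at most `2`; either way
the first `k` terms sum to at least `2k + min k 2`, the corresponding partial sum of `(3, 3, 2, …)`.

For the upper bound, connectedness makes every degree positive, so the last `n - k` terms leave at
most `2(n+1) - (n-k)` for the first `k`, which settles `k ≥ 4`. For `k = 1` the maximum degree is
at most `n - 1`; for `k = 2, 3` note that `k` vertices have total degree at most `|E| + C(k, 2)`,
since only an edge between two of them is counted twice.
-/

open Finset SimpleGraph

theorem Finset.sum_card_le_card_biUnion_add_choose {ι α : Type*} [DecidableEq ι] [DecidableEq α]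
    (s : Finset ι) (A : ι → Finset α) (hA : ∀ i ∈ s, ∀ j ∈ s, i ≠ j → #(A i ∩ A j) ≤ 1) :
    ∑ i ∈ s, #(A i) ≤ #(s.biUnion A) + (#s).choose 2 := by
  induction s using Finset.induction_on with
  | empty => simp
  | insert a s ha ih =>
    have hs : ∑ i ∈ s, #(A i) ≤ #(s.biUnion A) + (#s).choose 2 :=
      ih fun i hi j hj => hA i (mem_insert_of_mem hi) j (mem_insert_of_mem hj)
    have hinter : #(A a ∩ s.biUnion A) ≤ #s := calc
      #(A a ∩ s.biUnion A) = #(s.biUnion fun j => A a ∩ A j) := by rw [inter_biUnion]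
      _ ≤ ∑ j ∈ s, #(A a ∩ A j) := card_biUnion_le
      _ ≤ #s • 1 := sum_le_card_nsmul _ _ _ fun j hj =>
          hA a (mem_insert_self a s) j (mem_insert_of_mem hj) (ne_of_mem_of_not_mem hj ha).symm
      _ = #s := by rw [smul_eq_mul, mul_one]
    have hunion := card_union_add_card_inter (A a) (s.biUnion A)
    have hchoose : (#s + 1).choose 2 = (#s).choose 2 + #s := by
      rw [Nat.choose_succ_succ', Nat.choose_one_right, add_comm]
    rw [sum_insert ha, biUnion_insert, card_insert_of_notMem ha, hchoose]
    omega

namespace SimpleGraph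

section Incidence

variable {V : Type*} [Fintype V] [DecidableEq V] (G : SimpleGraph V) [DecidableRel G.Adj]

theorem card_incidenceFinset_inter_le_one {u v : V} (huv : u ≠ v) :
    #(G.incidenceFinset u ∩ G.incidenceFinset v) ≤ 1 := by
  refine (card_le_card fun e he => ?_).trans (card_singleton s(u, v)).le
  rw [mem_inter, mem_incidenceFinset, mem_incidenceFinset] at he
  simpa using G.incidenceSet_inter_incidenceSet_subset huv he

theorem sum_degree_le_card_edgeFinset_add_choose (s : Finset V) :
    ∑ v ∈ s, G.degree v ≤ #G.edgeFinset + (#s).choose 2 := by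
  simp_rw [← card_incidenceFinset_eq_degree]
  calc ∑ v ∈ s, #(G.incidenceFinset v)
      ≤ #(s.biUnion fun v => G.incidenceFinset v) + (#s).choose 2 :=
        sum_card_le_card_biUnion_add_choose s _ fun u _ v _ =>
          G.card_incidenceFinset_inter_le_one
    _ ≤ #G.edgeFinset + (#s).choose 2 := by
        gcongr
        exact biUnion_subset.2 fun v _ => by
          rw [incidenceFinset_eq_filter]; exact filter_subset _ _

end Incidence

section DegreeSequence

variable {V : Type*} [Fintype V] {G : SimpleGraph V} [DecidableRel G.Adj] {n : ℕ} {σ : Fin n ≃ V}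
  {d : ℕ → ℕ}

theorem sum_range_eq_twice_card_edgeFinset (hd : ∀ i : Fin n, G.degree (σ i) = d i) :
    ∑ i ∈ range n, d i = 2 * #G.edgeFinset := by
  rw [sum_range, ← G.sum_degrees_eq_twice_card_edges, ← σ.sum_comp]
  simp only [hd]

theorem sum_range_le_card_edgeFinset_add_choose [DecidableEq V]
    (hd : ∀ i : Fin n, G.degree (σ i) = d i) {k : ℕ} (hk : k ≤ n) :
    ∑ i ∈ range k, d i ≤ #G.edgeFinset + k.choose 2 := by
  let e : Fin k ↪ V := (Fin.castLEEmb hk).trans σ.toEmbedding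
  calc ∑ i ∈ range k, d i = ∑ v ∈ univ.map e, G.degree v := by
        rw [sum_range, sum_map]
        exact sum_congr rfl fun i _ => (hd (Fin.castLE hk i)).symm
    _ ≤ #G.edgeFinset + k.choose 2 := by
        simpa using G.sum_degree_le_card_edgeFinset_add_choose (univ.map e)

end DegreeSequence

end SimpleGraph

def bicyclicMinSeq (i : ℕ) : ℕ := if i < 2 then 3 else 2

def bicyclicMaxSeq (n i : ℕ) : ℕ := if i = 0 then n - 1 else if i = 1 then 3 else if i < 4 then 2 else 1

theorem sum_range_bicyclicMinSeq (k : ℕ) : ∑ i ∈ range k, bicyclicMinSeq i = 2 * k + min k 2 := by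
  induction k with
  | zero => rfl
  | succ k ih =>
    rw [sum_range_succ, ih, bicyclicMinSeq]
    split_ifs <;> omega

theorem sum_range_add_four_bicyclicMaxSeq {n : ℕ} (hn : 1 ≤ n) (k : ℕ) :
    ∑ i ∈ range (k + 4), bicyclicMaxSeq n i = n + k + 6 := by
  induction k with
  | zero =>
    simp only [sum_range_succ, range_one, sum_singleton, bicyclicMaxSeq, ↓reduceIte,
      Nat.reduceEqDiff, Nat.reduceLT]
    omega
  | succ k ih =>
    rw [add_right_comm, sum_range_succ, ih, bicyclicMaxSeq, if_neg (by omega), if_neg (by omega),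
      if_neg (by omega)]
    omega

section Majorization

variable {d : ℕ → ℕ} {n k c : ℕ}

theorem sum_range_add_mul_le_sum_range (hk : k ≤ n) (hc : ∀ i, k ≤ i → i < n → c ≤ d i) :
    ∑ i ∈ range k, d i + (n - k) * c ≤ ∑ i ∈ range n, d i := by
  rw [← sum_range_add_sum_Ico d hk]
  gcongr
  simpa using card_nsmul_le_sum (Ico k n) d c fun i hi => hc i (mem_Ico.1 hi).1 (mem_Ico.1 hi).2

theorem sum_range_le_sum_range_add_mul (hk : k ≤ n) (hc : ∀ i, k ≤ i → i < n → d i ≤ c) :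
    ∑ i ∈ range n, d i ≤ ∑ i ∈ range k, d i + (n - k) * c := by
  rw [← sum_range_add_sum_Ico d hk]
  gcongr
  simpa using sum_le_card_nsmul (Ico k n) d c fun i hi => hc i (mem_Ico.1 hi).1 (mem_Ico.1 hi).2

theorem sum_range_bicyclicMinSeq_le (hmono : ∀ i j, i ≤ j → j < n → d j ≤ d i)
    (hsum : ∑ i ∈ range n, d i = 2 * (n + 1)) (hk : k ≤ n) :
    ∑ i ∈ range k, bicyclicMinSeq i ≤ ∑ i ∈ range k, d i := by
  rw [sum_range_bicyclicMinSeq]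
  rcases k with _ | k
  · simp
  by_cases h3 : 3 ≤ d k
  · have : (k + 1) * 3 ≤ ∑ i ∈ range (k + 1), d i := by
      simpa using card_nsmul_le_sum (range (k + 1)) d 3 fun i hi =>
        h3.trans (hmono i k (Nat.lt_succ_iff.1 (mem_range.1 hi)) (by omega))
    omega
  · have := sum_range_le_sum_range_add_mul (d := d) (c := 2) hk fun i hi hin => by
      have := hmono k i (by omega) hin
      omega
    omega

theorem sum_range_le_sum_range_bicyclicMaxSeq (hsum : ∑ i ∈ range n, d i = 2 * (n + 1))
    (hpos : ∀ i < n, 1 ≤ d i) (hmax : d 0 ≤ n - 1)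
    (hprefix : ∀ k ≤ n, ∑ i ∈ range k, d i ≤ n + 1 + k.choose 2) (hk₁ : 1 ≤ k) (hk : k ≤ n) :
    ∑ i ∈ range k, d i ≤ ∑ i ∈ range k, bicyclicMaxSeq n i := by
  match k, hk₁, hk with
  | 1, _, _ => simpa [bicyclicMaxSeq] using hmax
  | 2, _, hk | 3, _, hk =>
    have := hprefix _ hk
    simp only [sum_range_succ, range_one, sum_singleton, bicyclicMaxSeq, Nat.choose_self,
      Nat.choose_succ_self_right, Nat.reduceAdd, ↓reduceIte, Nat.reduceEqDiff, Nat.reduceLT]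
      at this ⊢
    omega
  | j + 4, _, hk =>
    rw [sum_range_add_four_bicyclicMaxSeq (by omega)]
    have := sum_range_add_mul_le_sum_range hk fun i _ hi => hpos i hi
    omega

end Majorization

/-- If `G` is a bicyclic graph on `n ≥ 4` vertices with nonincreasing degree
sequence `d`, then `(3, 3, 2^{n-2}) ⊴ d ⊴ (n-1, 3, 2, 2, 1^{n-4})` in the sense
of partial sums together with equal total sums `2(n+1)`.  (0-indexed.) -/
theorem bicyclic_extremal_degree_sequences (n : ℕ) (hn : 4 ≤ n)
    (G : SimpleGraph (Fin n)) (hconn : G.Connected)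
    (hedges : G.edgeSet.ncard = n + 1)
    (d : ℕ → ℕ) (hmono : ∀ i j, i ≤ j → j < n → d j ≤ d i)
    (hdeg : ∃ σ : Equiv.Perm (Fin n),
        ∀ i : Fin n, (G.neighborSet (σ i)).ncard = d (i : ℕ)) :
    (∀ k, 1 ≤ k → k ≤ n - 1 →
      ∑ i ∈ Finset.range k, (if i < 2 then 3 else 2) ≤
        ∑ i ∈ Finset.range k, d i) ∧
    (∑ i ∈ Finset.range n, (if i < 2 then 3 else 2) = 2 * (n + 1)) ∧
    (∑ i ∈ Finset.range n, d i = 2 * (n + 1)) ∧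
    (∀ k, 1 ≤ k → k ≤ n - 1 →
      ∑ i ∈ Finset.range k, d i ≤
        ∑ i ∈ Finset.range k,
          (if i = 0 then n - 1 else if i = 1 then 3 else if i < 4 then 2 else 1)) ∧
    (∑ i ∈ Finset.range n,
        (if i = 0 then n - 1 else if i = 1 then 3 else if i < 4 then 2 else 1) =
      2 * (n + 1)) := by
  classical
  obtain ⟨σ, hσ⟩ := hdeg
  have hd : ∀ i : Fin n, G.degree (σ i) = d i := fun i => by
    rw [← hσ i, ← card_neighborFinset_eq_degree, neighborFinset, Set.ncard_eq_toFinset_card']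
  have hm : #G.edgeFinset = n + 1 := by
    rw [edgeFinset, ← Set.ncard_eq_toFinset_card', hedges]
  have hsum : ∑ i ∈ range n, d i = 2 * (n + 1) := hm ▸ sum_range_eq_twice_card_edgeFinset hd
  have : Nontrivial (Fin n) := Fin.nontrivial_iff_two_le.2 (by omega)
  have hpos : ∀ i < n, 1 ≤ d i := fun i hi =>
    hd ⟨i, hi⟩ ▸ hconn.preconnected.degree_pos_of_nontrivial _
  have hmax : d 0 ≤ n - 1 := by
    have h0 : G.degree (σ ⟨0, by omega⟩) = d 0 := hd _
    have := G.degree_lt_card_verts (σ ⟨0, by omega⟩)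
    rw [h0, Fintype.card_fin] at this
    omega
  have hprefix : ∀ k ≤ n, ∑ i ∈ range k, d i ≤ n + 1 + k.choose 2 := fun k hk =>
    hm ▸ sum_range_le_card_edgeFinset_add_choose hd hk
  refine ⟨fun k _ hk => sum_range_bicyclicMinSeq_le hmono hsum (by omega), ?_, hsum,
    fun k hk₁ hk => sum_range_le_sum_range_bicyclicMaxSeq hsum hpos hmax hprefix hk₁ (by omega), ?_⟩
  · change ∑ i ∈ range n, bicyclicMinSeq i = _
    rw [sum_range_bicyclicMinSeq]
    omega
  · change ∑ i ∈ range n, bicyclicMaxSeq n i = _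
    obtain ⟨j, rfl⟩ : ∃ j, n = j + 4 := ⟨n - 4, by omega⟩
    rw [sum_range_add_four_bicyclicMaxSeq (by omega)]
    omega
end

section
/- Let G be a tricyclic graph (a connected simple graph on n ≥ 5 vertices with n+2 edges) with degree sequence d_1 ≥ d_2 ≥ ⋯ ≥ d_n. Then the vector (3, 3, 3, 3, 2, …, 2) (with n−4 trailing twos) is majorized by (d_1, …, d_n); i.e. Σ_{i=1}^k min(3k, 2k+4)-type partial sums satisfy Σ_{i=1}^k d_i ≥ 3k for k ≤ 4 and Σ_{i=1}^k d_i ≥ 2k+4 for 4 ≤ k ≤ n, with Σ_{i=1}^n d_i = 2(n+2). -/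
/-! The handshake lemma makes the degree sum `2(n+2)`. For a cut-off `k`, either the `k` largest
degrees are all at least `3`, or some of them is at most `2`, and then so is every later degree,
whence the first `k` degrees carry at least `2(n+2) - 2(n-k) = 2k+4`. -/

open Finset

lemma mul_le_sum_range_or_sum_range_le_add_mul {n : ℕ} {d : ℕ → ℕ}
    (hmono : ∀ i j, i ≤ j → j < n → d j ≤ d i) (t : ℕ) {k : ℕ} (hkn : k ≤ n) :
    (t + 1) * k ≤ ∑ i ∈ range k, d i ∨
      ∑ i ∈ range n, d i ≤ ∑ i ∈ range k, d i + t * (n - k) := by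
  by_cases hlarge : ∀ i < k, t + 1 ≤ d i
  · left
    simpa [mul_comm] using
      card_nsmul_le_sum (range k) d (t + 1) fun i hi => hlarge i (mem_range.mp hi)
  · right
    push Not at hlarge
    obtain ⟨i₀, hi₀k, hi₀⟩ := hlarge
    have htail : ∑ i ∈ Ico k n, d i ≤ t * (n - k) := by
      simpa [mul_comm] using sum_le_card_nsmul (Ico k n) d t fun j hj =>
        (hmono i₀ j (by grind) (mem_Ico.mp hj).2).trans (by omega)
    rw [← sum_range_add_sum_Ico d hkn]
    omega

lemma min_le_sum_range_of_sum_range_eq {n m : ℕ} {d : ℕ → ℕ}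
    (hmono : ∀ i j, i ≤ j → j < n → d j ≤ d i) (hsum : ∑ i ∈ range n, d i = 2 * n + m)
    {k : ℕ} (hkn : k ≤ n) : min (3 * k) (2 * k + m) ≤ ∑ i ∈ range k, d i := by
  rcases mul_le_sum_range_or_sum_range_le_add_mul hmono 2 hkn with h | h <;> omega

lemma sum_range_degree_sequence_eq {n : ℕ} (G : SimpleGraph (Fin n)) (d : ℕ → ℕ)
    (σ : Equiv.Perm (Fin n)) (hσ : ∀ i : Fin n, (G.neighborSet (σ i)).ncard = d i) :
    ∑ i ∈ range n, d i = 2 * G.edgeSet.ncard := by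
  classical
  calc ∑ i ∈ range n, d i = ∑ i : Fin n, G.degree (σ i) := by
        rw [← Fin.sum_univ_eq_sum_range]
        refine sum_congr rfl fun i _ => ?_
        rw [← hσ i, Set.ncard_eq_toFinset_card', ← G.neighborFinset_def,
          G.card_neighborFinset_eq_degree]
    _ = 2 * G.edgeFinset.card := by
        rw [Equiv.sum_comp σ (fun v => G.degree v), G.sum_degrees_eq_twice_card_edges]
    _ = 2 * G.edgeSet.ncard := by
        rw [← Set.ncard_coe_finset, SimpleGraph.coe_edgeFinset]

theorem tricyclic_minimal_degree_sequence_general (n : ℕ) (hn : 5 ≤ n)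
    (G : SimpleGraph (Fin n))
    (hedges : G.edgeSet.ncard = n + 2)
    (d : ℕ → ℕ) (hmono : ∀ i j, i ≤ j → j < n → d j ≤ d i)
    (hdeg : ∃ σ : Equiv.Perm (Fin n),
        ∀ i : Fin n, (G.neighborSet (σ i)).ncard = d (i : ℕ)) :
    (∀ k, k ≤ 4 → 3 * k ≤ ∑ i ∈ Finset.range k, d i) ∧
    (∀ k, 4 ≤ k → k ≤ n → 2 * k + 4 ≤ ∑ i ∈ Finset.range k, d i) ∧
    ∑ i ∈ Finset.range n, d i = 2 * (n + 2) := by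
  obtain ⟨σ, hσ⟩ := hdeg
  have hsum : ∑ i ∈ range n, d i = 2 * n + 4 := by
    rw [sum_range_degree_sequence_eq G d σ hσ, hedges]
    ring
  refine ⟨fun k hk4 => ?_, fun k hk4 hkn => ?_, by omega⟩
  · have := min_le_sum_range_of_sum_range_eq hmono hsum (k := k) (by omega)
    omega
  · have := min_le_sum_range_of_sum_range_eq hmono hsum hkn
    omega

/-- If `G` is a tricyclic graph on `n ≥ 5` vertices with nonincreasing degree
sequence `d`, then `(3, 3, 3, 3, 2^{n-4}) ⊴ d`; i.e. `∑_{i<k} d i ≥ 3k` for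
`k ≤ 4`, `∑_{i<k} d i ≥ 2k + 4` for `4 ≤ k ≤ n`, and `∑_{i<n} d i = 2(n+2)`.
(0-indexed.) -/
theorem tricyclic_minimal_degree_sequence (n : ℕ) (hn : 5 ≤ n)
    (G : SimpleGraph (Fin n)) (hconn : G.Connected)
    (hedges : G.edgeSet.ncard = n + 2)
    (d : ℕ → ℕ) (hmono : ∀ i j, i ≤ j → j < n → d j ≤ d i)
    (hdeg : ∃ σ : Equiv.Perm (Fin n),
        ∀ i : Fin n, (G.neighborSet (σ i)).ncard = d (i : ℕ)) :
    (∀ k, k ≤ 4 → 3 * k ≤ ∑ i ∈ Finset.range k, d i) ∧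
    (∀ k, 4 ≤ k → k ≤ n → 2 * k + 4 ≤ ∑ i ∈ Finset.range k, d i) ∧
    ∑ i ∈ Finset.range n, d i = 2 * (n + 2) :=
  tricyclic_minimal_degree_sequence_general n hn G hedges d hmono hdeg
end
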